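/- arXiv:2302.13073 — 13 statements merged into one kernel-verified Lean document; each statement's English description precedes it below -/
import Mathlib

section
/- Let P > 0 and let p, q : [0,∞) → ℝ be continuous. Then the initial value problem g′(t) = −P·g(t)³ + (P/√2)·g(t)² + p(t)·g(t) + q(t)/√2 with g(0) = 1/√2 has a solution g that is continuously differentiable on all of [0,∞), and this solution is unique: any two continuously differentiable functions on [0,∞) satisfying the equation and the initial condition coincide. -/
/-!
Write `v t x` for the right-hand side. Its `x`-derivative is jointly continuous, so `v t` is
Lipschitz on bounded sets uniformly for `t` in a compact interval, and Grönwall gives uniqueness.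
On `[0, b]` the cubic term `-P x³` dominates, so some `[-M, M] ∋ 1/√2` is a trapping interval:
`v t (-M) > 0 > v t M`. Picard–Lindelöf solves the ODE for the field clamped to `[-M, M]`, which
is globally Lipschitz and bounded; the solution cannot leave `[-M, M]`, so it solves the original
ODE. By uniqueness the solutions on the intervals `[0, b]` glue to a global one.
-/

open Set Metric Function Real
open scoped NNReal

section IntegralCurve

variable {E : Type*} [NormedAddCommGroup E] [NormedSpace ℝ E] {γ f g : ℝ → E} {v : ℝ → E → E}
  {s : Set ℝ} {a b : ℝ}

theorem isIntegralCurveOn_iff_derivWithin (hs : UniqueDiffOn ℝ s) :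
    IsIntegralCurveOn γ v s ↔ DifferentiableOn ℝ γ s ∧ ∀ t ∈ s, derivWithin γ s t = v t (γ t) :=
  ⟨fun h => ⟨fun t ht => (h t ht).differentiableWithinAt,
      fun t ht => (h t ht).derivWithin (hs t ht)⟩,
    fun ⟨hd, he⟩ t ht => he t ht ▸ (hd t ht).hasDerivWithinAt⟩

theorem IsIntegralCurveOn.contDiffOn_one (hγ : IsIntegralCurveOn γ v s) (hs : UniqueDiffOn ℝ s)
    (hv : ContinuousOn (uncurry v) (s ×ˢ univ)) : ContDiffOn ℝ 1 γ s := by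
  have hcont : ContinuousOn (fun t => v t (γ t)) s :=
    hv.comp (continuousOn_id.prodMk hγ.continuousOn) fun t ht => ⟨ht, trivial⟩
  rw [isIntegralCurveOn_iff_derivWithin hs] at hγ
  have := (contDiffOn_succ_iff_derivWithin (n := 0) hs).2
    ⟨hγ.1, by simp, contDiffOn_zero.2 (hcont.congr hγ.2)⟩
  simpa using this

theorem IsIntegralCurveOn.hasDerivWithinAt_Ici (hγ : IsIntegralCurveOn γ v (Icc a b)) {t : ℝ}
    (ht : t ∈ Ico a b) : HasDerivWithinAt γ (v t (γ t)) (Ici t) t :=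
  (hγ t (Ico_subset_Icc_self ht)).mono_of_mem_nhdsWithin (Icc_mem_nhdsGE_of_mem ht)

theorem IsIntegralCurveOn.eqOn_Icc
    (hv : ∀ R, ∃ K, ∀ t ∈ Ico a b, LipschitzOnWith K (v t) (closedBall 0 R))
    (hf : IsIntegralCurveOn f v (Icc a b)) (hg : IsIntegralCurveOn g v (Icc a b)) (ha : f a = g a) :
    EqOn f g (Icc a b) := by
  obtain ⟨Rf, hRf⟩ := isCompact_Icc.exists_bound_of_continuousOn hf.continuousOn
  obtain ⟨Rg, hRg⟩ := isCompact_Icc.exists_bound_of_continuousOn hg.continuousOn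
  obtain ⟨K, hK⟩ := hv (max Rf Rg)
  refine ODE_solution_unique_of_mem_Icc_right hK hf.continuousOn (fun _ => hf.hasDerivWithinAt_Ici)
    (fun t ht => ?_) hg.continuousOn (fun _ => hg.hasDerivWithinAt_Ici) (fun t ht => ?_) ha
  · exact mem_closedBall_zero_iff.2 ((hRf t (Ico_subset_Icc_self ht)).trans (le_max_left _ _))
  · exact mem_closedBall_zero_iff.2 ((hRg t (Ico_subset_Icc_self ht)).trans (le_max_right _ _))

theorem exists_isIntegralCurveOn_Ici_of_Icc {x₀ : E}
    (hex : ∀ b ≥ a, ∃ f, f a = x₀ ∧ IsIntegralCurveOn f v (Icc a b))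
    (huniq : ∀ b f g, IsIntegralCurveOn f v (Icc a b) → IsIntegralCurveOn g v (Icc a b) →
      f a = g a → EqOn f g (Icc a b)) :
    ∃ f, f a = x₀ ∧ IsIntegralCurveOn f v (Ici a) := by
  have hex' : ∀ b, ∃ f, f a = x₀ ∧ IsIntegralCurveOn f v (Icc a b) := fun b =>
    (hex (max a b) (le_max_left a b)).imp fun f hf =>
      ⟨hf.1, hf.2.mono (Icc_subset_Icc_right (le_max_right a b))⟩
  choose sol hsol₀ hsol using hex'
  have hglue : ∀ t, EqOn (fun s => sol (s + 1) s) (sol (t + 1)) (Icc a (t + 1)) := fun t s hs =>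
    huniq (min (s + 1) (t + 1)) _ _ ((hsol _).mono (Icc_subset_Icc_right (min_le_left _ _)))
      ((hsol _).mono (Icc_subset_Icc_right (min_le_right _ _))) ((hsol₀ _).trans (hsol₀ _).symm)
      ⟨hs.1, le_min (by linarith) hs.2⟩
  refine ⟨fun s => sol (s + 1) s, hsol₀ _, fun t ht => ?_⟩
  have htI : t ∈ Icc a (t + 1) := ⟨ht, by linarith⟩
  refine ((hsol (t + 1) t htI).congr (hglue t) (hglue t htI)).mono_of_mem_nhdsWithin ?_
  exact inter_mem_nhdsWithin (Ici a) (Iic_mem_nhds (lt_add_one t))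

theorem exists_isIntegralCurveOn_Icc_of_lipschitzWith [CompleteSpace E] {w : ℝ → E → E}
    (hab : a ≤ b) (x₀ : E) {K L : ℝ≥0} (hK : ∀ t ∈ Icc a b, LipschitzWith K (w t))
    (hc : ∀ x, ContinuousOn (w · x) (Icc a b)) (hL : ∀ t ∈ Icc a b, ∀ x, ‖w t x‖ ≤ L) :
    ∃ f, f a = x₀ ∧ IsIntegralCurveOn f w (Icc a b) :=
  IsPicardLindelof.exists_eq_forall_mem_Icc_hasDerivWithinAt₀ (t₀ := ⟨a, left_mem_Icc.2 hab⟩)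
    (x₀ := x₀) (a := L * (b - a).toNNReal)
    { lipschitzOnWith := fun t ht => (hK t ht).lipschitzOnWith
      continuousOn := fun x _ => hc x
      norm_le := fun t ht x _ => hL t ht x
      mul_max_le := by simp [hab] }

end IntegralCurve

theorem exists_lipschitzOnWith_of_hasDerivWithinAt {α E : Type*} [TopologicalSpace α]
    [NormedAddCommGroup E] [NormedSpace ℝ E] {v v' : α → ℝ → E} {s : Set α} {C : Set ℝ}
    (hs : IsCompact s) (hC : IsCompact C) (hCc : Convex ℝ C)
    (hv : ∀ t ∈ s, ∀ x ∈ C, HasDerivWithinAt (v t) (v' t x) C x)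
    (hv' : ContinuousOn (uncurry v') (s ×ˢ C)) :
    ∃ K, ∀ t ∈ s, LipschitzOnWith K (v t) C := by
  obtain ⟨B, hB⟩ := (hs.prod hC).exists_bound_of_continuousOn hv'
  refine ⟨B.toNNReal, fun t ht => hCc.lipschitzOnWith_of_nnnorm_hasDerivWithin_le (hv t ht)
    fun x hx => ?_⟩
  rw [← NNReal.coe_le_coe, coe_nnnorm]
  exact (hB (t, x) ⟨ht, hx⟩).trans (Real.le_coe_toNNReal B)

theorem mapsTo_Icc_of_deriv_right_boundary {f f' : ℝ → ℝ} {a b m M : ℝ}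
    (hf : ContinuousOn f (Icc a b)) (hf' : ∀ x ∈ Ico a b, HasDerivWithinAt f (f' x) (Ici x) x)
    (ha : f a ∈ Icc m M) (hm : ∀ x ∈ Ico a b, f x = m → 0 < f' x)
    (hM : ∀ x ∈ Ico a b, f x = M → f' x < 0) : MapsTo f (Icc a b) (Icc m M) := by
  intro x hx
  refine ⟨?_, image_le_of_deriv_right_lt_deriv_boundary hf hf' ha.2 (fun _ => hasDerivAt_const _ M)
    hM hx⟩
  have := image_le_of_deriv_right_lt_deriv_boundary (f := (-f ·)) (B := fun _ => -m) hf.neg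
    (fun x hx => (hf' x hx).neg) (neg_le_neg ha.1) (fun _ => hasDerivAt_const _ (-m))
    (fun x hx hfx => neg_neg_iff_pos.2 (hm x hx (neg_inj.1 hfx))) hx
  exact neg_le_neg_iff.1 this

theorem exists_isIntegralCurveOn_Icc_of_trapping {v : ℝ → ℝ → ℝ} {a b m M x₀ : ℝ} {K : ℝ≥0}
    (hab : a ≤ b) (hx₀ : x₀ ∈ Icc m M) (hv : ContinuousOn (uncurry v) (Icc a b ×ˢ Icc m M))
    (hK : ∀ t ∈ Icc a b, LipschitzOnWith K (v t) (Icc m M))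
    (hm : ∀ t ∈ Icc a b, 0 < v t m) (hM : ∀ t ∈ Icc a b, v t M < 0) :
    ∃ f, f a = x₀ ∧ IsIntegralCurveOn f v (Icc a b) := by
  have hmM : m ≤ M := hx₀.1.trans hx₀.2
  set w : ℝ → ℝ → ℝ := fun t x => v t (projIcc m M hmM x)
  obtain ⟨L, hL⟩ := (isCompact_Icc.prod isCompact_Icc).exists_bound_of_continuousOn hv
  obtain ⟨f, hf₀, hf⟩ := exists_isIntegralCurveOn_Icc_of_lipschitzWith (w := w) hab x₀
    (K := K * 1) (L := L.toNNReal)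
    (fun t ht => (hK t ht).to_restrict.comp (LipschitzWith.projIcc hmM))
    (fun x => hv.comp (continuousOn_id.prodMk continuousOn_const)
      fun t ht => ⟨ht, (projIcc m M hmM x).2⟩)
    (fun t ht x => (hL (t, _) ⟨ht, (projIcc m M hmM x).2⟩).trans (Real.le_coe_toNNReal L))
  have hfmM : MapsTo f (Icc a b) (Icc m M) := mapsTo_Icc_of_deriv_right_boundary hf.continuousOn
    (fun _ => hf.hasDerivWithinAt_Ici) (hf₀ ▸ hx₀)
    (fun t ht hft => by simpa [w, hft, projIcc_left] using hm t (Ico_subset_Icc_self ht))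
    (fun t ht hft => by simpa [w, hft, projIcc_right] using hM t (Ico_subset_Icc_self ht))
  refine ⟨f, hf₀, fun t ht => ?_⟩
  simpa [w, projIcc_of_mem hmM (hfmM ht)] using hf t ht

section PartialDerivative

variable {v v' : ℝ → ℝ → ℝ} {a : ℝ}

theorem exists_lipschitzOnWith_Icc_of_hasDerivAt (hv' : ∀ t ≥ a, ∀ x, HasDerivAt (v t) (v' t x) x)
    (hv'c : ContinuousOn (uncurry v') (Ici a ×ˢ univ)) (b : ℝ) {C : Set ℝ} (hC : IsCompact C)
    (hCc : Convex ℝ C) : ∃ K, ∀ t ∈ Icc a b, LipschitzOnWith K (v t) C :=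
  exists_lipschitzOnWith_of_hasDerivWithinAt isCompact_Icc hC hCc
    (fun t ht x _ => (hv' t ht.1 x).hasDerivWithinAt)
    (hv'c.mono (prod_mono Icc_subset_Ici_self (subset_univ C)))

theorem IsIntegralCurveOn.eqOn_Icc_of_hasDerivAt {f g : ℝ → ℝ} {b : ℝ}
    (hv' : ∀ t ≥ a, ∀ x, HasDerivAt (v t) (v' t x) x)
    (hv'c : ContinuousOn (uncurry v') (Ici a ×ˢ univ))
    (hf : IsIntegralCurveOn f v (Icc a b)) (hg : IsIntegralCurveOn g v (Icc a b)) (ha : f a = g a) :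
    EqOn f g (Icc a b) :=
  hf.eqOn_Icc (fun R => (exists_lipschitzOnWith_Icc_of_hasDerivAt hv' hv'c b
    (isCompact_closedBall 0 R) (convex_closedBall 0 R)).imp
      fun _ hK t ht => hK t (Ico_subset_Icc_self ht)) hg ha

theorem IsIntegralCurveOn.eqOn_Ici_of_hasDerivAt {f g : ℝ → ℝ}
    (hv' : ∀ t ≥ a, ∀ x, HasDerivAt (v t) (v' t x) x)
    (hv'c : ContinuousOn (uncurry v') (Ici a ×ˢ univ))
    (hf : IsIntegralCurveOn f v (Ici a)) (hg : IsIntegralCurveOn g v (Ici a)) (ha : f a = g a) :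
    EqOn f g (Ici a) := fun _ ht =>
  (hf.mono Icc_subset_Ici_self).eqOn_Icc_of_hasDerivAt hv' hv'c (hg.mono Icc_subset_Ici_self) ha
    ⟨ht, le_rfl⟩

theorem exists_isIntegralCurveOn_Ici_of_trapping {x₀ : ℝ}
    (hv : ContinuousOn (uncurry v) (Ici a ×ˢ univ))
    (hv' : ∀ t ≥ a, ∀ x, HasDerivAt (v t) (v' t x) x)
    (hv'c : ContinuousOn (uncurry v') (Ici a ×ˢ univ))
    (htrap : ∀ b, ∃ m M, x₀ ∈ Icc m M ∧ ∀ t ∈ Icc a b, 0 < v t m ∧ v t M < 0) :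
    ∃ f, f a = x₀ ∧ IsIntegralCurveOn f v (Ici a) := by
  refine exists_isIntegralCurveOn_Ici_of_Icc (fun b hab => ?_)
    fun b _ _ hf hg => hf.eqOn_Icc_of_hasDerivAt hv' hv'c hg
  obtain ⟨m, M, hx₀, hmM⟩ := htrap b
  obtain ⟨K, hK⟩ := exists_lipschitzOnWith_Icc_of_hasDerivAt hv' hv'c b isCompact_Icc
    (convex_Icc m M)
  exact exists_isIntegralCurveOn_Icc_of_trapping hab hx₀
    (hv.mono (prod_mono Icc_subset_Ici_self (subset_univ _))) hK (fun t ht => (hmM t ht).1)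
    (fun t ht => (hmM t ht).2)

end PartialDerivative

section AcgnField

noncomputable def acgnField (P : ℝ) (p q : ℝ → ℝ) (t x : ℝ) : ℝ :=
  -P * x ^ 3 + (P / √2) * x ^ 2 + p t * x + q t / √2

variable {P : ℝ} {p q : ℝ → ℝ}

theorem hasDerivAt_acgnField (t x : ℝ) :
    HasDerivAt (acgnField P p q t) (-P * (3 * x ^ 2) + P / √2 * (2 * x) + p t) x := by
  have := ((((hasDerivAt_pow 3 x).const_mul (-P)).add ((hasDerivAt_pow 2 x).const_mul (P / √2))).add
    ((hasDerivAt_id x).const_mul (p t))).add_const (q t / √2)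
  exact this.congr_deriv (by simp)

theorem continuousOn_uncurry_acgnField {s : Set ℝ} (hp : ContinuousOn p s) (hq : ContinuousOn q s) :
    ContinuousOn (uncurry (acgnField P p q)) (s ×ˢ univ) := by
  simp only [uncurry_def, acgnField]
  fun_prop (disch := first | exact fun _ hz => (mem_prod.1 hz).1 | intros; positivity)

theorem continuousOn_uncurry_deriv_acgnField {s : Set ℝ} (hp : ContinuousOn p s) :
    ContinuousOn (uncurry fun t x => -P * (3 * x ^ 2) + P / √2 * (2 * x) + p t) (s ×ˢ univ) := by
  simp only [uncurry_def]
  fun_prop (disch := first | exact fun _ hz => (mem_prod.1 hz).1 | intros; positivity)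

theorem abs_acgnField_add_cube_le {B x t : ℝ} (hP : 0 ≤ P) (hp : |p t| ≤ B) (hq : |q t| ≤ B)
    (hx : 1 ≤ |x|) : |acgnField P p q t x + P * x ^ 3| ≤ (P + 2 * B) * x ^ 2 := by
  have hs : 1 ≤ √2 := one_le_sqrt.2 one_le_two
  have hx2 : |x| ≤ x ^ 2 := by nlinarith [sq_abs x]
  have h1 : |P / √2 * x ^ 2| ≤ P * x ^ 2 := by
    rw [abs_mul, abs_of_nonneg (by positivity), abs_of_nonneg (sq_nonneg x)]
    gcongr; exact div_le_self hP hs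
  have h2 : |p t * x| ≤ B * x ^ 2 := by
    rw [abs_mul]; exact mul_le_mul hp hx2 (abs_nonneg x) ((abs_nonneg _).trans hp)
  have h3 : |q t / √2| ≤ B * x ^ 2 := by
    rw [abs_div, abs_of_pos (show (0:ℝ) < √2 by positivity)]
    calc |q t| / √2 ≤ |q t| := div_le_self (abs_nonneg _) hs
      _ ≤ B * 1 := by linarith
      _ ≤ B * x ^ 2 := by gcongr; exacts [(abs_nonneg _).trans hp, by nlinarith [sq_abs x]]
  calc |acgnField P p q t x + P * x ^ 3| = |P / √2 * x ^ 2 + p t * x + q t / √2| := by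
        simp only [acgnField]; ring_nf
    _ ≤ |P / √2 * x ^ 2| + |p t * x| + |q t / √2| := abs_add_three _ _ _
    _ ≤ (P + 2 * B) * x ^ 2 := by linarith

theorem acgnField_trapping (hP : 0 < P) (hp : ContinuousOn p (Ici 0)) (hq : ContinuousOn q (Ici 0))
    (b : ℝ) : ∃ m M, 1 / √2 ∈ Icc m M ∧
      ∀ t ∈ Icc 0 b, 0 < acgnField P p q t m ∧ acgnField P p q t M < 0 := by
  obtain ⟨Bp, hBp⟩ := isCompact_Icc.exists_bound_of_continuousOn
    (hp.mono (Icc_subset_Ici_self : Icc 0 b ⊆ _))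
  obtain ⟨Bq, hBq⟩ := isCompact_Icc.exists_bound_of_continuousOn
    (hq.mono (Icc_subset_Ici_self : Icc 0 b ⊆ _))
  set B := max (max Bp Bq) 0
  set M := 2 + 2 * B / P
  have hB : 0 ≤ B := le_max_right _ _
  have hM : 1 ≤ M := le_add_of_le_of_nonneg one_le_two (by positivity)
  have hdom : (P + 2 * B) * M ^ 2 < P * M ^ 3 := by
    have hPM : P * M = 2 * P + 2 * B := by simp only [M]; field_simp
    nlinarith
  have hx₀ : 1 / √2 ≤ 1 := (div_le_one (by positivity)).2 (one_le_sqrt.2 one_le_two)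
  refine ⟨-M, M, ⟨by linarith [one_div_nonneg.2 (sqrt_nonneg 2)], by linarith⟩, fun t ht => ?_⟩
  have hpt : |p t| ≤ B := (hBp t ht).trans ((le_max_left _ _).trans (le_max_left _ _))
  have hqt : |q t| ≤ B := (hBq t ht).trans ((le_max_right _ _).trans (le_max_left _ _))
  have hMabs : |M| = M := abs_of_pos (by linarith)
  have hlow := abs_le.1 <|
    abs_acgnField_add_cube_le (x := -M) hP.le hpt hqt (by rwa [abs_neg, hMabs])
  have hup := abs_le.1 <| abs_acgnField_add_cube_le (x := M) hP.le hpt hqt (by rwa [hMabs])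
  constructor
  · nlinarith
  · nlinarith

end AcgnField

/-- For P > 0 and continuous p, q on [0,∞), the IVP
g′(t) = −P·g(t)³ + (P/√2)·g(t)² + p(t)·g(t) + q(t)/√2, g(0) = 1/√2,
has a continuously differentiable solution on all of [0,∞), and this solution
is unique among continuously differentiable solutions on [0,∞). -/
theorem ou_acgn_ode_exists_unique (P : ℝ) (hP : 0 < P) (p q : ℝ → ℝ)
    (hp : ContinuousOn p (Set.Ici (0:ℝ))) (hq : ContinuousOn q (Set.Ici (0:ℝ))) :
    (∃ g : ℝ → ℝ, ContDiffOn ℝ 1 g (Set.Ici (0:ℝ)) ∧ g 0 = 1 / Real.sqrt 2 ∧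
      ∀ t ∈ Set.Ici (0:ℝ), derivWithin g (Set.Ici (0:ℝ)) t =
        -P * g t ^ 3 + (P / Real.sqrt 2) * g t ^ 2 + p t * g t + q t / Real.sqrt 2) ∧
    (∀ g₁ g₂ : ℝ → ℝ,
      ContDiffOn ℝ 1 g₁ (Set.Ici (0:ℝ)) → g₁ 0 = 1 / Real.sqrt 2 →
      (∀ t ∈ Set.Ici (0:ℝ), derivWithin g₁ (Set.Ici (0:ℝ)) t =
        -P * g₁ t ^ 3 + (P / Real.sqrt 2) * g₁ t ^ 2 + p t * g₁ t + q t / Real.sqrt 2) →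
      ContDiffOn ℝ 1 g₂ (Set.Ici (0:ℝ)) → g₂ 0 = 1 / Real.sqrt 2 →
      (∀ t ∈ Set.Ici (0:ℝ), derivWithin g₂ (Set.Ici (0:ℝ)) t =
        -P * g₂ t ^ 3 + (P / Real.sqrt 2) * g₂ t ^ 2 + p t * g₂ t + q t / Real.sqrt 2) →
      ∀ t ∈ Set.Ici (0:ℝ), g₁ t = g₂ t) := by
  have hv := continuousOn_uncurry_acgnField (P := P) hp hq
  have hv' : ∀ t ≥ (0:ℝ), ∀ x, HasDerivAt (acgnField P p q t) _ x := fun t _ =>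
    hasDerivAt_acgnField t
  have hv'c := continuousOn_uncurry_deriv_acgnField (P := P) hp
  have hIci (γ : ℝ → ℝ) :=
    isIntegralCurveOn_iff_derivWithin (γ := γ) (v := acgnField P p q) (uniqueDiffOn_Ici 0)
  obtain ⟨g, hg₀, hg⟩ :=
    exists_isIntegralCurveOn_Ici_of_trapping hv hv' hv'c (acgnField_trapping hP hp hq)
  refine ⟨⟨g, hg.contDiffOn_one (uniqueDiffOn_Ici 0) hv, hg₀, ((hIci g).1 hg).2⟩, ?_⟩
  intro g₁ g₂ hc₁ hg₁₀ hd₁ hc₂ hg₂₀ hd₂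
  exact IsIntegralCurveOn.eqOn_Ici_of_hasDerivAt hv' hv'c
    ((hIci g₁).2 ⟨hc₁.differentiableOn one_ne_zero, hd₁⟩)
    ((hIci g₂).2 ⟨hc₂.differentiableOn one_ne_zero, hd₂⟩) (hg₁₀.trans hg₂₀.symm)
end

section
/- Let P > 0, let p, q : [0,∞) → ℝ be continuous, and let 0 < T₀ < ∞. If g : [0,T₀) → ℝ is continuously differentiable, satisfies g′(t) = −P·g(t)³ + (P/√2)·g(t)² + p(t)·g(t) + q(t)/√2 for all t ∈ [0,T₀), and g(0) = 1/√2, then g is bounded on [0,T₀). In particular, no solution of this initial value problem blows up (tends to +∞ or −∞) in finite time. -/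
/-!
On a compact time interval the coefficients `p` and `q` are bounded, so for `|y| = M` with `M`
large the cubic term dominates and `y · g'` is negative: the solution can never cross the level
`|g| = M` outward. A right-derivative barrier argument then confines `g` to `[-M, M]`.
-/

open Set Filter

theorem exists_mul_neg_cubic_of_abs_eq (P B C D m₀ : ℝ) (hP : 0 < P) :
    ∃ M, m₀ ≤ M ∧ ∀ b c d y : ℝ, |b| ≤ B → |c| ≤ C → |d| ≤ D → |y| = M →
      y * (-P * y ^ 3 + b * y ^ 2 + c * y + d) < 0 := by
  refine ⟨max (max m₀ 1) ((B + C + D) / P + 1), le_max_of_le_left (le_max_left _ _), ?_⟩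
  intro b c d y hb hc hd hy
  set M := max (max m₀ 1) ((B + C + D) / P + 1)
  have hM1 : 1 ≤ M := le_max_of_le_left (le_max_right _ _)
  have hPM : B + C + D < P * M := by
    have : (B + C + D) / P < M := by linarith [le_max_right (max m₀ 1) ((B + C + D) / P + 1)]
    linarith [(div_lt_iff₀ hP).1 this]
  have hM2 : M ≤ M ^ 2 := by nlinarith
  have hM3 : M ^ 2 ≤ M ^ 3 := by nlinarith
  have hb3 : b * y ^ 3 ≤ B * M ^ 3 := by
    calc b * y ^ 3 ≤ |b * y ^ 3| := le_abs_self _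
      _ = |b| * M ^ 3 := by rw [abs_mul, abs_pow, hy]
      _ ≤ B * M ^ 3 := by gcongr
  have hc2 : c * y ^ 2 ≤ C * M ^ 3 := by
    calc c * y ^ 2 ≤ |c * y ^ 2| := le_abs_self _
      _ = |c| * M ^ 2 := by rw [abs_mul, abs_pow, hy]
      _ ≤ C * M ^ 3 := by gcongr; exact (abs_nonneg c).trans hc
  have hd1 : d * y ≤ D * M ^ 3 := by
    calc d * y ≤ |d * y| := le_abs_self _
      _ = |d| * M := by rw [abs_mul, hy]
      _ ≤ D * M ^ 3 := by gcongr; exacts [(abs_nonneg d).trans hd, hM2.trans hM3]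
  have hy4 : y ^ 4 = M ^ 4 := by rw [← hy, Even.pow_abs ⟨2, rfl⟩]
  have hM3pos : 0 < M ^ 3 := by positivity
  calc y * (-P * y ^ 3 + b * y ^ 2 + c * y + d)
      = -P * y ^ 4 + b * y ^ 3 + c * y ^ 2 + d * y := by ring
    _ ≤ M ^ 3 * (B + C + D - P * M) := by rw [hy4]; linear_combination hb3 + hc2 + hd1
    _ < 0 := mul_neg_of_pos_of_neg hM3pos (by linarith)

theorem abs_image_le_of_mul_deriv_right_neg_boundary {f f' : ℝ → ℝ} {a b M : ℝ}
    (hf : ContinuousOn f (Icc a b)) (hf' : ∀ x ∈ Ico a b, HasDerivWithinAt f (f' x) (Ici x) x)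
    (ha : |f a| ≤ M) (bound : ∀ x ∈ Ico a b, |f x| = M → f x * f' x < 0) :
    ∀ ⦃x⦄, x ∈ Icc a b → |f x| ≤ M := by
  have hM : 0 ≤ M := (abs_nonneg _).trans ha
  have upper := image_le_of_deriv_right_lt_deriv_boundary hf hf' (abs_le.1 ha).2
    (fun x => hasDerivAt_const x M) fun x hx hfx =>
      neg_of_mul_neg_right (bound x hx (by rw [hfx, abs_of_nonneg hM])) (hfx ▸ hM)
  have lower := image_le_of_deriv_right_lt_deriv_boundary hf.neg (fun x hx => (hf' x hx).neg)
    (neg_le.1 (abs_le.1 ha).1) (fun x => hasDerivAt_const x M) fun x hx (hfx : -f x = M) =>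
      neg_of_mul_neg_right (by simpa using bound x hx (by rw [← abs_neg, hfx, abs_of_nonneg hM]))
        (hfx ▸ hM)
  exact fun x hx => abs_le.2 ⟨neg_le.1 (lower hx), upper hx⟩

theorem DifferentiableOn.hasDerivWithinAt_Ici_derivWithin_Ico {g : ℝ → ℝ} {a b x : ℝ}
    (hg : DifferentiableOn ℝ g (Ico a b)) (hx : x ∈ Ico a b) :
    HasDerivWithinAt g (derivWithin g (Ico a b) x) (Ici x) x :=
  (hg x hx).hasDerivWithinAt.mono_of_mem_nhdsWithin <|
    mem_of_superset (Ico_mem_nhdsGE hx.2) (Ico_subset_Ico_left hx.1)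

theorem ou_acgn_ode_no_blowup_general (P : ℝ) (hP : 0 < P) (p q : ℝ → ℝ)
    (hp : ContinuousOn p (Set.Ici (0:ℝ))) (hq : ContinuousOn q (Set.Ici (0:ℝ)))
    (T₀ : ℝ) (g : ℝ → ℝ)
    (hg : ContDiffOn ℝ 1 g (Set.Ico (0:ℝ) T₀)) (hg0 : g 0 = 1 / Real.sqrt 2)
    (hode : ∀ t ∈ Set.Ico (0:ℝ) T₀, derivWithin g (Set.Ico (0:ℝ) T₀) t =
      -P * g t ^ 3 + (P / Real.sqrt 2) * g t ^ 2 + p t * g t + q t / Real.sqrt 2) :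
    ∃ M : ℝ, ∀ t ∈ Set.Ico (0:ℝ) T₀, |g t| ≤ M := by
  obtain ⟨Cp, hCp⟩ := isCompact_Icc.exists_bound_of_continuousOn
    (hp.mono (Icc_subset_Ici_self : Icc 0 T₀ ⊆ _))
  obtain ⟨Cq, hCq⟩ := isCompact_Icc.exists_bound_of_continuousOn
    ((hq.div_const (Real.sqrt 2)).mono (Icc_subset_Ici_self : Icc 0 T₀ ⊆ _))
  obtain ⟨M, hM0, hM⟩ := exists_mul_neg_cubic_of_abs_eq P (P / Real.sqrt 2) Cp Cq
    (1 / Real.sqrt 2) hP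
  refine ⟨M, fun t ht => abs_image_le_of_mul_deriv_right_neg_boundary
    (hg.continuousOn.mono (Icc_subset_Ico_right ht.2))
    (fun x hx => (hg.differentiableOn one_ne_zero).hasDerivWithinAt_Ici_derivWithin_Ico
      (Ico_subset_Ico_right ht.2.le hx)) ?_ (fun x hx hgx => ?_) ⟨ht.1, le_rfl⟩⟩
  · rwa [hg0, abs_of_pos (by positivity)]
  · rw [hode x (Ico_subset_Ico_right ht.2.le hx)]
    have hx' : x ∈ Icc 0 T₀ := Ico_subset_Icc_self (Ico_subset_Ico_right ht.2.le hx)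
    exact hM _ _ _ _ (abs_of_pos (by positivity)).le (hCp x hx') (hCq x hx') hgx

/-- Any continuously differentiable solution of the IVP on a finite
interval [0,T₀) is bounded there; in particular no solution blows up in finite time. -/
theorem ou_acgn_ode_no_blowup (P : ℝ) (hP : 0 < P) (p q : ℝ → ℝ)
    (hp : ContinuousOn p (Set.Ici (0:ℝ))) (hq : ContinuousOn q (Set.Ici (0:ℝ)))
    (T₀ : ℝ) (hT₀ : 0 < T₀) (g : ℝ → ℝ)
    (hg : ContDiffOn ℝ 1 g (Set.Ico (0:ℝ) T₀)) (hg0 : g 0 = 1 / Real.sqrt 2)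
    (hode : ∀ t ∈ Set.Ico (0:ℝ) T₀, derivWithin g (Set.Ico (0:ℝ) T₀) t =
      -P * g t ^ 3 + (P / Real.sqrt 2) * g t ^ 2 + p t * g t + q t / Real.sqrt 2) :
    ∃ M : ℝ, ∀ t ∈ Set.Ico (0:ℝ) T₀, |g t| ≤ M :=
  ou_acgn_ode_no_blowup_general P hP p q hp hq T₀ g hg hg0 hode
end

section
/- Let P > 0, let l_u : [0,∞) → ℝ be continuous, and let l_d : [0,∞) → ℝ be continuously differentiable with l_d(t) ≠ 0 for all t ≥ 0. Let g : [0,∞) → ℝ be a continuously differentiable solution of g′(t) = −P·g(t)³ + (P/√2)·g(t)² − (l_d′(t)/l_d(t))·g(t) + (l_d′(t)+l_u(t))/(√2·l_d(t)) with g(0) = 1/√2, and set A(t) = √P · exp(∫₀ᵗ P·g(s)² ds). Then for every t ≥ 0: √2 · g(t) · A(t) · l_d(t) = l_d(t)·A(t) + ∫₀ᵗ l_u(s)·A(s) ds. -/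
/-!
Put `H(t) = l_d(t) · A(t) · (√2 g(t) - 1)`. Since `A' = P g² A`, the product rule and the Abel
equation make every term of `H'` cancel except `l_u · A`; as `H(0) = 0` because `g(0) = 1/√2`,
the fundamental theorem of calculus gives `H(t) = ∫₀ᵗ l_u A`, which is the identity.
-/

open Set MeasureTheory intervalIntegral

theorem integral_eq_sub_of_hasDerivWithinAt_Ici {E : Type*} [NormedAddCommGroup E]
    [NormedSpace ℝ E] [CompleteSpace E] {f f' : ℝ → E} {a b : ℝ} (hab : a ≤ b)
    (hf : ∀ t ∈ Ici a, HasDerivWithinAt f (f' t) (Ici a) t)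
    (hf' : IntervalIntegrable f' volume a b) :
    ∫ t in a..b, f' t = f b - f a :=
  integral_eq_sub_of_hasDeriv_right_of_le hab
    (fun t ht => (hf t ht.1).continuousWithinAt.mono Icc_subset_Ici_self)
    (fun t ht => (hf t ht.1.le).mono (Ioi_subset_Ici ht.1.le)) hf'

theorem hasDerivWithinAt_integral_Ici {f : ℝ → ℝ} {a t : ℝ} (hf : ContinuousOn f (Ici a))
    (ht : a ≤ t) : HasDerivWithinAt (fun u => ∫ x in a..u, f x) (f t) (Ici a) t := by
  have hint : IntervalIntegrable f volume a t :=
    (hf.mono (by rw [uIcc_of_le ht]; exact Icc_subset_Ici_self)).intervalIntegrable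
  rcases ht.eq_or_lt with rfl | ht
  · exact integral_hasDerivWithinAt_right hint
      ((hf.mono Ioi_subset_Ici_self).stronglyMeasurableAtFilter_nhdsWithin measurableSet_Ioi a)
      ((hf a self_mem_Ici).mono Ioi_subset_Ici_self)
  · exact (integral_hasDerivAt_right hint
      ((hf.mono Ioi_subset_Ici_self).stronglyMeasurableAtFilter isOpen_Ioi t ht)
      (hf.continuousAt (Ici_mem_nhds ht))).hasDerivWithinAt

/-- The right-hand side of the Abel equation at a time where `l_u = u`, `l_d = l`, `l_d' = l'`. -/
noncomputable def abelField (P u l l' y : ℝ) : ℝ :=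
  -P * y ^ 3 + (P / Real.sqrt 2) * y ^ 2 - (l' / l) * y + (l' + u) / (Real.sqrt 2 * l)

theorem hasDerivWithinAt_abel_defect {s : Set ℝ} {t P u l' : ℝ} {l A g : ℝ → ℝ}
    (hl : HasDerivWithinAt l l' s t) (hA : HasDerivWithinAt A (P * g t ^ 2 * A t) s t)
    (hg : HasDerivWithinAt g (abelField P u (l t) l' (g t)) s t) (hl0 : l t ≠ 0) :
    HasDerivWithinAt (fun t => l t * A t * (Real.sqrt 2 * g t - 1)) (u * A t) s t := by
  rw [abelField] at hg
  refine ((hl.mul hA).mul ((hg.const_mul (Real.sqrt 2)).sub_const 1)).congr_deriv ?_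
  simp only [Pi.mul_apply]
  field_simp
  ring

theorem sk_amplitude_identity_general (P : ℝ) (lu ld ld' : ℝ → ℝ)
    (hlu : ContinuousOn lu (Set.Ici (0:ℝ)))
    (hld : ∀ t ∈ Set.Ici (0:ℝ), HasDerivWithinAt ld (ld' t) (Set.Ici (0:ℝ)) t)
    (hldne : ∀ t ∈ Set.Ici (0:ℝ), ld t ≠ 0)
    (g : ℝ → ℝ) (hg : ContDiffOn ℝ 1 g (Set.Ici (0:ℝ))) (hg0 : g 0 = 1 / Real.sqrt 2)
    (hode : ∀ t ∈ Set.Ici (0:ℝ), derivWithin g (Set.Ici (0:ℝ)) t =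
      -P * g t ^ 3 + (P / Real.sqrt 2) * g t ^ 2 - (ld' t / ld t) * g t
        + (ld' t + lu t) / (Real.sqrt 2 * ld t))
    (A : ℝ → ℝ)
    (hA : ∀ t, A t = Real.sqrt P * Real.exp (∫ s in (0:ℝ)..t, P * g s ^ 2)) :
    ∀ t ∈ Set.Ici (0:ℝ),
      Real.sqrt 2 * g t * A t * ld t = ld t * A t + ∫ s in (0:ℝ)..t, lu s * A s := by
  intro x hx
  have hgd : ∀ t ∈ Ici (0:ℝ), HasDerivWithinAt g (derivWithin g (Ici 0) t) (Ici 0) t :=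
    fun t ht => ((hg.differentiableOn one_ne_zero) t ht).hasDerivWithinAt
  have hPg2 : ContinuousOn (fun s => P * g s ^ 2) (Ici 0) :=
    continuousOn_const.mul (hg.continuousOn.pow 2)
  have hAd : ∀ t ∈ Ici (0:ℝ), HasDerivWithinAt A (P * g t ^ 2 * A t) (Ici 0) t := by
    intro t ht
    rw [funext hA]
    refine (((hasDerivWithinAt_integral_Ici hPg2 ht).exp).const_mul
        (Real.sqrt P)).congr_deriv ?_
    ring
  have hAc : ContinuousOn A (Ici 0) := fun t ht => (hAd t ht).continuousWithinAt
  have hH := integral_eq_sub_of_hasDerivWithinAt_Ici hx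
    (fun t ht => hasDerivWithinAt_abel_defect (hld t ht) (hAd t ht)
      (by rw [abelField, ← hode t ht]; exact hgd t ht) (hldne t ht))
    ((hlu.mul hAc).mono (by rw [uIcc_of_le hx]; exact Icc_subset_Ici_self)).intervalIntegrable
  rw [hH, hg0, mul_one_div_cancel (by positivity), sub_self, mul_zero, sub_zero]
  ring

/-- With g solving the Abel equation and
A(t) = √P·exp(∫₀ᵗ P g(s)² ds), for every t ≥ 0 one has
√2·g(t)·A(t)·l_d(t) = l_d(t)·A(t) + ∫₀ᵗ l_u(s)·A(s) ds. -/
theorem sk_amplitude_identity (P : ℝ) (hP : 0 < P) (lu ld ld' : ℝ → ℝ)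
    (hlu : ContinuousOn lu (Set.Ici (0:ℝ)))
    (hld : ∀ t ∈ Set.Ici (0:ℝ), HasDerivWithinAt ld (ld' t) (Set.Ici (0:ℝ)) t)
    (hld' : ContinuousOn ld' (Set.Ici (0:ℝ)))
    (hldne : ∀ t ∈ Set.Ici (0:ℝ), ld t ≠ 0)
    (g : ℝ → ℝ) (hg : ContDiffOn ℝ 1 g (Set.Ici (0:ℝ))) (hg0 : g 0 = 1 / Real.sqrt 2)
    (hode : ∀ t ∈ Set.Ici (0:ℝ), derivWithin g (Set.Ici (0:ℝ)) t =
      -P * g t ^ 3 + (P / Real.sqrt 2) * g t ^ 2 - (ld' t / ld t) * g t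
        + (ld' t + lu t) / (Real.sqrt 2 * ld t))
    (A : ℝ → ℝ)
    (hA : ∀ t, A t = Real.sqrt P * Real.exp (∫ s in (0:ℝ)..t, P * g s ^ 2)) :
    ∀ t ∈ Set.Ici (0:ℝ),
      Real.sqrt 2 * g t * A t * ld t = ld t * A t + ∫ s in (0:ℝ)..t, lu s * A s :=
  sk_amplitude_identity_general P lu ld ld' hlu hld hldne g hg hg0 hode A hA
end

section
/- Let P > 0, κ > 0 and λ ∈ ℝ with −2κ ≤ λ ≤ 0. Then the cubic equation −P·y³ + (P/√2)·y² − |λ+κ|·y + κ/√2 = 0 has exactly one positive real root; moreover this is its only real root (the cubic has no root y ≤ 0). -/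
/-!
Write `c = 1/√2` and `a = |λ + κ|`, so that `0 ≤ a ≤ κ` and the cubic equals
`κ c - a y - P y² (y - c)`. For `y < c` the last term is nonnegative and `κ c - a y > 0`,
so all real roots lie in `[c, ∞)`. There the cubic is strictly decreasing, equal to
`(κ - a) c ≥ 0` at `c`, and nonpositive at `c + κ / (P c)` because `P y² (y - c) ≥ κ c` there;
hence it has exactly one root.
-/

open Set

noncomputable def ouCubic (P c a κ y : ℝ) : ℝ :=
  -P * y ^ 3 + P * c * y ^ 2 - a * y + κ * c

section OuCubic

variable {P c a κ : ℝ}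

lemma ouCubic_eq (P c a κ y : ℝ) :
    ouCubic P c a κ y = κ * c - a * y - P * y ^ 2 * (y - c) := by
  unfold ouCubic; ring

lemma ouCubic_pos_of_lt (hP : 0 ≤ P) (hκ : 0 < κ) (ha : 0 ≤ a) (haκ : a ≤ κ) (hc : 0 < c)
    {y : ℝ} (hy : y < c) : 0 < ouCubic P c a κ y := by
  have hcubic : 0 ≤ -(P * y ^ 2 * (y - c)) :=
    neg_nonneg.2 (mul_nonpos_of_nonneg_of_nonpos (by positivity) (by linarith))
  have hlinear : a * y < κ * c := by
    rcases le_or_gt y 0 with hy0 | hy0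
    · nlinarith [mul_pos hκ hc]
    · nlinarith
  rw [ouCubic_eq]
  linarith

lemma ouCubic_strictAntiOn (hP : 0 < P) (ha : 0 ≤ a) (hc : 0 < c) :
    StrictAntiOn (ouCubic P c a κ) (Ici c) := by
  intro y₁ (h₁ : c ≤ y₁) y₂ (h₂ : c ≤ y₂) h₁₂
  have hfactor : ouCubic P c a κ y₁ - ouCubic P c a κ y₂ =
      (y₂ - y₁) * (P * (y₁ * (y₁ - c) + y₂ * (y₂ - c) + y₁ * y₂) + a) := by
    unfold ouCubic; ring
  have hpos : 0 < P * (y₁ * (y₁ - c) + y₂ * (y₂ - c) + y₁ * y₂) + a := by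
    have : 0 < y₁ * (y₁ - c) + y₂ * (y₂ - c) + y₁ * y₂ := by
      have hy₁ : 0 < y₁ := hc.trans_le h₁
      have hy₂ : 0 < y₂ := hc.trans_le h₂
      nlinarith [mul_nonneg hy₁.le (sub_nonneg.2 h₁), mul_nonneg hy₂.le (sub_nonneg.2 h₂),
        mul_pos hy₁ hy₂]
    positivity
  nlinarith [mul_pos (sub_pos.2 h₁₂) hpos]

lemma ouCubic_self (P c a κ : ℝ) : ouCubic P c a κ c = (κ - a) * c := by
  unfold ouCubic; ring

lemma ouCubic_add_div_nonpos (hP : 0 < P) (hκ : 0 ≤ κ) (ha : 0 ≤ a) (hc : 0 < c) :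
    ouCubic P c a κ (c + κ / (P * c)) ≤ 0 := by
  set t := κ / (P * c) with ht
  have ht0 : 0 ≤ t := by positivity
  have hPct : P * c * t = κ := by rw [ht]; field_simp
  have hsq : c ^ 2 ≤ (c + t) ^ 2 := pow_le_pow_left₀ hc.le (by linarith) 2
  have hat : 0 ≤ a * (c + t) := mul_nonneg ha (by linarith)
  rw [ouCubic_eq]
  nlinarith [mul_le_mul_of_nonneg_left hsq (mul_nonneg hP.le ht0)]

lemma exists_ouCubic_eq_zero (hP : 0 < P) (hκ : 0 ≤ κ) (ha : 0 ≤ a) (haκ : a ≤ κ)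
    (hc : 0 < c) : ∃ y, c ≤ y ∧ ouCubic P c a κ y = 0 := by
  have hcb : c ≤ c + κ / (P * c) := le_add_of_nonneg_right (by positivity)
  have hcont : ContinuousOn (ouCubic P c a κ) (Icc c (c + κ / (P * c))) := by
    unfold ouCubic; fun_prop
  have hstart : 0 ≤ ouCubic P c a κ c := by
    rw [ouCubic_self]; exact mul_nonneg (sub_nonneg.2 haκ) hc.le
  obtain ⟨y, hy, hy0⟩ := intermediate_value_Icc' hcb hcont
    ⟨ouCubic_add_div_nonpos hP hκ ha hc, hstart⟩
  exact ⟨y, hy.1, hy0⟩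

theorem exists_forall_ouCubic_eq_zero_iff (hP : 0 < P) (hκ : 0 < κ) (ha : 0 ≤ a) (haκ : a ≤ κ)
    (hc : 0 < c) : ∃ y₀, c ≤ y₀ ∧ ∀ y, ouCubic P c a κ y = 0 ↔ y = y₀ := by
  obtain ⟨y₀, hcy₀, hy₀⟩ := exists_ouCubic_eq_zero hP hκ.le ha haκ hc
  have hroot_ge : ∀ y, ouCubic P c a κ y = 0 → c ≤ y := fun y hy =>
    not_lt.1 fun hyc => (ouCubic_pos_of_lt hP.le hκ ha haκ hc hyc).ne' hy
  refine ⟨y₀, hcy₀, fun y => ⟨fun hy => ?_, fun hy => hy ▸ hy₀⟩⟩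
  exact (ouCubic_strictAntiOn hP ha hc).injOn (hroot_ge y hy) hcy₀ (hy.trans hy₀.symm)

end OuCubic

/-- For P > 0, κ > 0 and −2κ ≤ λ ≤ 0, the cubic
−P·y³ + (P/√2)·y² − |λ+κ|·y + κ/√2 has exactly one positive real root,
and every real root is positive. -/
theorem ou_cubic_unique_positive_root (P κ lam : ℝ) (hP : 0 < P) (hκ : 0 < κ)
    (hlam₁ : -2 * κ ≤ lam) (hlam₂ : lam ≤ 0) :
    (∃! y : ℝ, 0 < y ∧
      -P * y ^ 3 + (P / Real.sqrt 2) * y ^ 2 - |lam + κ| * y + κ / Real.sqrt 2 = 0) ∧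
    (∀ y : ℝ,
      -P * y ^ 3 + (P / Real.sqrt 2) * y ^ 2 - |lam + κ| * y + κ / Real.sqrt 2 = 0 →
      0 < y) := by
  have hc : 0 < (Real.sqrt 2)⁻¹ := by positivity
  have ha : |lam + κ| ≤ κ := abs_le.2 ⟨by linarith, by linarith⟩
  obtain ⟨y₀, hcy₀, hroots⟩ := exists_forall_ouCubic_eq_zero_iff hP hκ (abs_nonneg _) ha hc
  have hy₀ : 0 < y₀ := hc.trans_le hcy₀
  have hiff : ∀ y, -P * y ^ 3 + (P / Real.sqrt 2) * y ^ 2 - |lam + κ| * y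
      + κ / Real.sqrt 2 = 0 ↔ y = y₀ := fun y => by
    simpa only [ouCubic, div_eq_mul_inv] using hroots y
  exact ⟨⟨y₀, ⟨hy₀, (hiff y₀).2 rfl⟩, fun y hy => (hiff y).1 hy.2⟩,
    fun y hy => (hiff y).1 hy ▸ hy₀⟩
end

section
/- Let P > 0, κ > 0 and λ ∈ ℝ with −2κ < λ < 0. Then there exists exactly one x > 0 satisfying P·(x+κ)² = 2x·(x+|κ+λ|)². -/
/-!
With `a = |κ + λ|` the hypotheses give `0 ≤ a ≤ κ`, and a positive root is exactly a solution of
`2x ((x + a) / (x + κ))² = P`. The left side vanishes at `0`, is unbounded, and is strictly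
increasing on `(0, ∞)` because `(x + a) / (x + κ) = 1 - (κ - a) / (x + κ)` is nondecreasing there;
so the intermediate value theorem gives a root and monotonicity makes it unique.
-/

open Set

noncomputable def capacityRatio (a b x : ℝ) : ℝ := 2 * x * ((x + a) / (x + b)) ^ 2

section

variable {a b P : ℝ}

lemma capacityRatio_eq_iff {x : ℝ} (hx : 0 < x + b) :
    capacityRatio a b x = P ↔ P * (x + b) ^ 2 = 2 * x * (x + a) ^ 2 := by
  rw [capacityRatio, div_pow, ← mul_div_assoc, div_eq_iff (by positivity), eq_comm]

lemma monotoneOn_add_div_add (hab : a ≤ b) :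
    MonotoneOn (fun x => (x + a) / (x + b)) (Ioi (-b)) := by
  intro x hx y hy hxy
  have hx : 0 < x + b := by simp only [mem_Ioi] at hx; linarith
  have hy : 0 < y + b := by simp only [mem_Ioi] at hy; linarith
  rw [div_le_div_iff₀ hx hy]
  nlinarith [mul_nonneg (sub_nonneg.2 hxy) (sub_nonneg.2 hab)]

lemma strictMonoOn_capacityRatio (ha : 0 ≤ a) (hab : a ≤ b) :
    StrictMonoOn (capacityRatio a b) (Ioi 0) := by
  intro x hx y hy hxy
  simp only [mem_Ioi] at hx hy
  have hratio : (x + a) / (x + b) ≤ (y + a) / (y + b) :=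
    monotoneOn_add_div_add hab (by simp only [mem_Ioi]; linarith)
      (by simp only [mem_Ioi]; linarith) hxy.le
  have hratio_pos : 0 < (x + a) / (x + b) := by apply div_pos <;> linarith
  exact mul_lt_mul_of_lt_of_le_of_nonneg_of_pos (by linarith)
    (pow_le_pow_left₀ hratio_pos.le hratio 2) (by linarith)
    (pow_pos (hratio_pos.trans_le hratio) 2)

lemma continuousOn_capacityRatio (hb : 0 < b) : ContinuousOn (capacityRatio a b) (Ici 0) := by
  refine ContinuousOn.mul (by fun_prop) (ContinuousOn.pow (ContinuousOn.div (by fun_prop)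
    (by fun_prop) fun x hx => ?_) 2)
  simp only [mem_Ici] at hx
  linarith

lemma lt_capacityRatio (hP : 0 < P) (ha : 0 ≤ a) (hb : 0 < b) :
    P < capacityRatio a b (2 * P + b) := by
  set M := 2 * P + b
  have hM_pos : 0 < M := by positivity
  rw [capacityRatio, div_pow, ← mul_div_assoc, lt_div_iff₀ (by positivity)]
  calc P * (M + b) ^ 2 ≤ P * (2 * M) ^ 2 := by gcongr; linarith
    _ < 2 * M * M ^ 2 := by nlinarith [pow_pos hM_pos 2]
    _ ≤ 2 * M * (M + a) ^ 2 := by gcongr; linarith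

theorem existsUnique_pos_capacityRatio_eq (hP : 0 < P) (ha : 0 ≤ a) (hab : a ≤ b) (hb : 0 < b) :
    ∃! x : ℝ, 0 < x ∧ capacityRatio a b x = P := by
  have hM : 0 ≤ 2 * P + b := by linarith
  have hP_mem : P ∈ Ioo (capacityRatio a b 0) (capacityRatio a b (2 * P + b)) :=
    ⟨by simpa [capacityRatio] using hP, lt_capacityRatio hP ha hb⟩
  obtain ⟨x, hx, hxP⟩ :=
    intermediate_value_Ioo hM ((continuousOn_capacityRatio hb).mono Icc_subset_Ici_self) hP_mem
  exact ⟨x, ⟨hx.1, hxP⟩, fun y ⟨hy, hyP⟩ =>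
    (strictMonoOn_capacityRatio ha hab).injOn hy hx.1 (hyP.trans hxP.symm)⟩

theorem existsUnique_pos_capacity_root (hP : 0 < P) (ha : 0 ≤ a) (hab : a ≤ b) (hb : 0 < b) :
    ∃! x : ℝ, 0 < x ∧ P * (x + b) ^ 2 = 2 * x * (x + a) ^ 2 := by
  refine (existsUnique_congr fun x => ?_).1 (existsUnique_pos_capacityRatio_eq hP ha hab hb)
  exact and_congr_right fun hx => capacityRatio_eq_iff (by linarith)

end

theorem capacity_polynomial_unique_positive_root_general (P κ lam : ℝ) (hP : 0 < P)
    (hlam₁ : -2 * κ < lam) (hlam₂ : lam < 0) :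
    ∃! x : ℝ, 0 < x ∧ P * (x + κ) ^ 2 = 2 * x * (x + |κ + lam|) ^ 2 :=
  existsUnique_pos_capacity_root hP (abs_nonneg _) (abs_le.2 ⟨by linarith, by linarith⟩) (by linarith)

/-- For P > 0, κ > 0 and −2κ < λ < 0, there is exactly one x > 0 with
P·(x+κ)² = 2x·(x+|κ+λ|)². -/
theorem capacity_polynomial_unique_positive_root (P κ lam : ℝ) (hP : 0 < P) (hκ : 0 < κ)
    (hlam₁ : -2 * κ < lam) (hlam₂ : lam < 0) :
    ∃! x : ℝ, 0 < x ∧ P * (x + κ) ^ 2 = 2 * x * (x + |κ + lam|) ^ 2 :=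
  capacity_polynomial_unique_positive_root_general P κ lam hP hlam₁ hlam₂
end

section
/- Let P > 0, κ > 0 and λ ∈ ℝ. For every y > 0, the following are equivalent: (i) −P·y³ + (P/√2)·y² − |λ+κ|·y + κ/√2 = 0; (ii) the number x = P·y² satisfies P·(x+κ)² = 2x·(x+|κ+λ|)². Consequently, y ↦ P·y² is a bijection between the positive roots of the cubic −P·y³ + (P/√2)·y² − |λ+κ|·y + κ/√2 and the positive roots of P·(x+κ)² = 2x·(x+|κ+λ|)². -/
/-!
Since `P y² + κ - √2·y·(P y² + a)` is `√2` times the cubic, a positive `y` is a root of the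
cubic iff `P y² + κ = √2·y·(P y² + a)`. Both sides are nonnegative, so this is equivalent to the
equality of their squares, which after multiplying by `P` and writing `x = P y²` is the capacity
equation.
The map `y ↦ P y²` is a bijection of `(0, ∞)` onto itself, hence it matches the positive roots.
-/

open Real Set

theorem Set.BijOn.sep_of_iff {α β : Type*} {f : α → β} {s : Set α} {t : Set β}
    {p : α → Prop} {q : β → Prop} (h : BijOn f s t) (hpq : ∀ a ∈ s, p a ↔ q (f a)) :
    BijOn f {a ∈ s | p a} {b ∈ t | q b} :=
  ⟨fun a ha => ⟨h.mapsTo ha.1, (hpq a ha.1).1 ha.2⟩, h.injOn.mono fun _ ha => ha.1,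
    fun _ hb =>
      let ⟨a, ha, hab⟩ := h.surjOn hb.1
      ⟨a, ⟨ha, (hpq a ha).2 (hab ▸ hb.2)⟩, hab⟩⟩

theorem bijOn_const_mul_sq_Ioi {P : ℝ} (hP : 0 < P) :
    BijOn (fun y : ℝ => P * y ^ 2) (Ioi 0) (Ioi 0) := by
  refine InvOn.bijOn (f' := fun x => √(x / P)) ⟨fun y hy => ?_, fun x hx => ?_⟩
    (fun y hy => by simp only [mem_Ioi] at hy ⊢; positivity)
    (fun x hx => sqrt_pos.2 (div_pos hx hP))
  · simp only [mul_div_cancel_left₀ _ hP.ne', sqrt_sq (le_of_lt hy)]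
  · simp only [sq_sqrt (div_pos hx hP).le, mul_div_cancel₀ _ hP.ne']

theorem cubic_eq_div_sqrt_two (P κ a y : ℝ) :
    -P * y ^ 3 + P / √2 * y ^ 2 - a * y + κ / √2 =
      (P * y ^ 2 + κ - √2 * y * (P * y ^ 2 + a)) / √2 := by
  field_simp
  ring

theorem cubic_eq_zero_iff (P κ a y : ℝ) :
    -P * y ^ 3 + P / √2 * y ^ 2 - a * y + κ / √2 = 0 ↔
      P * y ^ 2 + κ = √2 * y * (P * y ^ 2 + a) := by
  rw [cubic_eq_div_sqrt_two, div_eq_zero_iff, sub_eq_zero, or_iff_left (by positivity)]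

theorem eq_sqrt_two_mul_iff_capacity {P κ a y : ℝ} (hP : 0 < P) (hκ : 0 ≤ κ) (ha : 0 ≤ a)
    (hy : 0 ≤ y) :
    P * y ^ 2 + κ = √2 * y * (P * y ^ 2 + a) ↔
      P * (P * y ^ 2 + κ) ^ 2 = 2 * (P * y ^ 2) * (P * y ^ 2 + a) ^ 2 := by
  have hsq : P * (√2 * y * (P * y ^ 2 + a)) ^ 2 = 2 * (P * y ^ 2) * (P * y ^ 2 + a) ^ 2 := by
    rw [mul_pow, mul_pow, sq_sqrt zero_le_two]
    ring
  rw [← hsq, mul_right_inj' hP.ne', sq_eq_sq₀ (by positivity) (by positivity)]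

/-- For y > 0, the cubic −P·y³ + (P/√2)·y² − |λ+κ|·y + κ/√2 = 0 holds
iff x = P·y² satisfies P·(x+κ)² = 2x·(x+|κ+λ|)²; consequently y ↦ P·y² is a bijection
between the positive roots of the cubic and the positive roots of the capacity equation. -/
theorem ou_cubic_capacity_bijection (P κ lam : ℝ) (hP : 0 < P) (hκ : 0 < κ) :
    (∀ y : ℝ, 0 < y →
      ((-P * y ^ 3 + (P / Real.sqrt 2) * y ^ 2 - |lam + κ| * y + κ / Real.sqrt 2 = 0) ↔
        P * (P * y ^ 2 + κ) ^ 2 = 2 * (P * y ^ 2) * (P * y ^ 2 + |κ + lam|) ^ 2)) ∧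
    Set.BijOn (fun y : ℝ => P * y ^ 2)
      {y : ℝ | 0 < y ∧
        -P * y ^ 3 + (P / Real.sqrt 2) * y ^ 2 - |lam + κ| * y + κ / Real.sqrt 2 = 0}
      {x : ℝ | 0 < x ∧ P * (x + κ) ^ 2 = 2 * x * (x + |κ + lam|) ^ 2} := by
  have roots_iff : ∀ y : ℝ, 0 < y →
      ((-P * y ^ 3 + (P / Real.sqrt 2) * y ^ 2 - |lam + κ| * y + κ / Real.sqrt 2 = 0) ↔
        P * (P * y ^ 2 + κ) ^ 2 = 2 * (P * y ^ 2) * (P * y ^ 2 + |κ + lam|) ^ 2) := fun y hy => by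
    rw [cubic_eq_zero_iff, add_comm κ lam]
    exact eq_sqrt_two_mul_iff_capacity hP hκ.le (abs_nonneg _) hy.le
  exact ⟨roots_iff, (bijOn_const_mul_sq_Ioi hP).sep_of_iff roots_iff⟩
end

section
/- Let P > 0, κ > 0 and λ ∈ ℝ with λ > 0 or λ < −2κ (equivalently |λ+κ| > κ). Then every real root y of the cubic −P·y³ + (P/√2)·y² − |λ+κ|·y + κ/√2 satisfies 0 < y < 1/√2; consequently P·y² < P/2 for every real root y. -/
/-!
Write `c = 1/√2` and `a = |λ+κ|`. The cubic is `-(y - c)(P y² + a) - (a - κ) c`, so at a root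
`(y - c)(P y² + a) = -(a - κ) c < 0` because `a > κ`; as `P y² + a ≥ 0` this forces `y < c`.
For `y ≤ 0` every term of the cubic is nonnegative and `κ c > 0`, so roots are positive.
-/

open Real

lemma lt_abs_add_of_pos_or_lt_neg_two_mul {lam κ : ℝ} (h : 0 < lam ∨ lam < -2 * κ) :
    κ < |lam + κ| := by
  rcases h with h | h
  · exact lt_abs.2 (Or.inl (by linarith))
  · exact lt_abs.2 (Or.inr (by linarith))

section CubicRoots

variable {P a c κ y : ℝ}

lemma pos_of_cubic_eq_zero (hP : 0 ≤ P) (ha : 0 ≤ a) (hc : 0 ≤ c) (hκc : 0 < κ * c)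
    (hy : -P * y ^ 3 + P * c * y ^ 2 - a * y + κ * c = 0) : 0 < y := by
  by_contra! hy0
  have hcube : 0 ≤ P * y ^ 2 * -y := mul_nonneg (mul_nonneg hP (sq_nonneg y)) (neg_nonneg.2 hy0)
  have hsq : 0 ≤ P * c * y ^ 2 := mul_nonneg (mul_nonneg hP hc) (sq_nonneg y)
  have hlin : 0 ≤ a * -y := mul_nonneg ha (neg_nonneg.2 hy0)
  linarith

lemma lt_of_cubic_eq_zero (hP : 0 ≤ P) (ha : 0 ≤ a) (hc : 0 < c) (hκa : κ < a)
    (hy : -P * y ^ 3 + P * c * y ^ 2 - a * y + κ * c = 0) : y < c := by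
  have hfactor : (y - c) * (P * y ^ 2 + a) = -((a - κ) * c) := by linear_combination -hy
  have hneg : (y - c) * (P * y ^ 2 + a) < 0 := by
    rw [hfactor]
    exact neg_neg_of_pos (mul_pos (sub_pos.2 hκa) hc)
  by_contra! hcy
  exact hneg.not_ge (mul_nonneg (sub_nonneg.2 hcy) (by positivity))

end CubicRoots

/-- For P > 0, κ > 0 and λ > 0 or λ < −2κ, every real root y of the
cubic −P·y³ + (P/√2)·y² − |λ+κ|·y + κ/√2 satisfies 0 < y < 1/√2, hence P·y² < P/2. -/
theorem ou_cubic_roots_below_half (P κ lam : ℝ) (hP : 0 < P) (hκ : 0 < κ)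
    (hlam : lam > 0 ∨ lam < -2 * κ) :
    ∀ y : ℝ,
      -P * y ^ 3 + (P / Real.sqrt 2) * y ^ 2 - |lam + κ| * y + κ / Real.sqrt 2 = 0 →
      0 < y ∧ y < 1 / Real.sqrt 2 ∧ P * y ^ 2 < P / 2 := by
  intro y hy
  have hc : 0 < 1 / √2 := by positivity
  have hroot : -P * y ^ 3 + P * (1 / √2) * y ^ 2 - |lam + κ| * y + κ * (1 / √2) = 0 := by
    rwa [mul_one_div, mul_one_div]
  have hy0 := pos_of_cubic_eq_zero hP.le (abs_nonneg _) hc.le (mul_pos hκ hc) hroot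
  have hyc := lt_of_cubic_eq_zero hP.le (abs_nonneg _) hc
    (lt_abs_add_of_pos_or_lt_neg_two_mul hlam) hroot
  have hy2 : y ^ 2 < 1 / 2 :=
    calc y ^ 2 < (1 / √2) ^ 2 := pow_lt_pow_left₀ hyc hy0.le two_ne_zero
      _ = 1 / 2 := by rw [div_pow, one_pow, sq_sqrt zero_le_two]
  refine ⟨hy0, hyc, ?_⟩
  calc P * y ^ 2 < P * (1 / 2) := mul_lt_mul_of_pos_left hy2 hP
    _ = P / 2 := mul_one_div P 2
end

section
/- Let P > 0, κ > 0 and λ ∈ ℝ with −2κ < λ < 0. Then the unique positive root x₀ of P·(x+κ)² = 2x·(x+|κ+λ|)² satisfies x₀ > P/2. (Thus the feedback capacity of the OU-Colored AWGN channel with −2κ < λ < 0 strictly exceeds the capacity P/2 of the white Gaussian channel: 'coloring' may increase capacity.) -/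
/-! Since `-2κ < λ < 0` means `|κ + λ| < κ`, the right-hand side `2x(x + |κ+λ|)²` of the
capacity equation is strictly smaller than `2x(x + κ)²` at any `x > 0`; comparing with the
left-hand side `P(x + κ)²` gives `P < 2x`. -/

lemma abs_add_lt_of_neg_two_mul_lt_of_neg {κ lam : ℝ} (hlam₁ : -2 * κ < lam) (hlam₂ : lam < 0) :
    |κ + lam| < κ :=
  abs_lt.mpr ⟨by linarith, by linarith⟩

lemma lt_two_mul_of_mul_sq_eq_two_mul_mul_sq {P κ a x : ℝ} (hx : 0 < x) (ha : 0 ≤ a)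
    (haκ : a < κ) (heq : P * (x + κ) ^ 2 = 2 * x * (x + a) ^ 2) : P < 2 * x := by
  have hpos : 0 < (x + κ) ^ 2 := pow_pos (by linarith) 2
  refine lt_of_mul_lt_mul_right ?_ hpos.le
  calc P * (x + κ) ^ 2 = 2 * x * (x + a) ^ 2 := heq
    _ < 2 * x * (x + κ) ^ 2 := by gcongr

theorem capacity_exceeds_white_capacity_general (P κ lam : ℝ)
    (hlam₁ : -2 * κ < lam) (hlam₂ : lam < 0) :
    ∀ x₀ : ℝ, 0 < x₀ → P * (x₀ + κ) ^ 2 = 2 * x₀ * (x₀ + |κ + lam|) ^ 2 →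
      x₀ > P / 2 := by
  intro x₀ hx₀ heq
  have := lt_two_mul_of_mul_sq_eq_two_mul_mul_sq hx₀ (abs_nonneg _)
    (abs_add_lt_of_neg_two_mul_lt_of_neg hlam₁ hlam₂) heq
  linarith

/-- For P > 0, κ > 0 and −2κ < λ < 0, any positive root x₀ of
P·(x+κ)² = 2x·(x+|κ+λ|)² (in particular the unique one) satisfies x₀ > P/2:
feedback capacity strictly exceeds P/2. -/
theorem capacity_exceeds_white_capacity (P κ lam : ℝ) (hP : 0 < P) (hκ : 0 < κ)
    (hlam₁ : -2 * κ < lam) (hlam₂ : lam < 0) :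
    ∀ x₀ : ℝ, 0 < x₀ → P * (x₀ + κ) ^ 2 = 2 * x₀ * (x₀ + |κ + lam|) ^ 2 →
      x₀ > P / 2 :=
  capacity_exceeds_white_capacity_general P κ lam hlam₁ hlam₂
end

section
/- Let κ > 0, λ ∈ ℝ and δ > 0. Set d_k = ∫_{kδ}^{(k+1)δ} e^{−κs} ds for k ≥ 0 and m(δ) = √(2κδ/(1−e^{−2κδ})). For any real sequence (b_k)_{k≥0} and any real number ζ, define z_k = b_k + λ·d_k·( m(δ)·ζ + Σ_{i=0}^{k−1} e^{κ(i+1)δ}·b_i ) for k ≥ 0 (with the empty sum equal to 0 when k = 0). Then for every k ≥ 0: z_{k+1} = e^{−κδ}·z_k + b_{k+1} + ( λ/κ − (λ/κ + 1)·e^{−κδ} )·b_k. -/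
/-!
The interval integrals `d k` form a geometric sequence, `d (k + 1) = e^{-κδ} d k`, and the
product of `d (k + 1)` with the new weight `e^{κ(k+1)δ}` of the partial sum is the constant
`(1 - e^{-κδ}) / κ`. Splitting off the last summand of `z (k + 1)` and using the first fact on
the remaining sum turns it into `e^{-κδ} (z k - b k)`; the second fact gives the `b k` term.
-/

open Finset Real

theorem eq_mul_add_of_eq_add_mul_partialSum {R : Type*} [CommRing R] {d w b z : ℕ → R}
    {lam q c s : R} (hd : ∀ k, d (k + 1) = q * d k) (hw : ∀ k, d (k + 1) * w k = c)
    (hz : ∀ k, z k = b k + lam * d k * (s + ∑ i ∈ range k, w i * b i)) (k : ℕ) :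
    z (k + 1) = q * z k + b (k + 1) + (lam * c - q) * b k := by
  rw [hz, hz, sum_range_succ]
  linear_combination lam * (s + ∑ i ∈ range k, w i * b i) * hd k + lam * b k * hw k

theorem integral_exp_mul {c : ℝ} (hc : c ≠ 0) (a b : ℝ) :
    ∫ s in a..b, exp (c * s) = (exp (c * b) - exp (c * a)) / c := by
  rw [intervalIntegral.integral_comp_mul_left (fun x => exp x) hc, integral_exp, smul_eq_mul,
    inv_mul_eq_div]

theorem integral_exp_neg_mul_Icc_step {κ : ℝ} (hκ : κ ≠ 0) (δ : ℝ) (k : ℕ) :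
    ∫ s in (k : ℝ) * δ..((k : ℝ) + 1) * δ, exp (-κ * s) =
      exp (-κ * (k * δ)) * (1 - exp (-κ * δ)) / κ := by
  rw [integral_exp_mul (neg_ne_zero.mpr hκ), add_one_mul, mul_add, exp_add]
  field_simp
  ring

theorem arma_recursion_of_ou_approximation_general (κ lam δ : ℝ) (hκ : 0 < κ)
    (d : ℕ → ℝ)
    (hd : ∀ k : ℕ, d k = ∫ s in ((k : ℝ) * δ)..(((k : ℝ) + 1) * δ), Real.exp (-κ * s))
    (m : ℝ)
    (b : ℕ → ℝ) (ζ : ℝ) (z : ℕ → ℝ)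
    (hz : ∀ k : ℕ, z k = b k + lam * d k *
      (m * ζ + ∑ i ∈ Finset.range k, Real.exp (κ * ((i : ℝ) + 1) * δ) * b i)) :
    ∀ k : ℕ, z (k + 1) = Real.exp (-κ * δ) * z k + b (k + 1) +
      (lam / κ - (lam / κ + 1) * Real.exp (-κ * δ)) * b k := by
  intro k
  have hd_closed (k : ℕ) : d k = exp (-κ * (k * δ)) * (1 - exp (-κ * δ)) / κ := by
    rw [hd, integral_exp_neg_mul_Icc_step hκ.ne']
  have hd_geom (k : ℕ) : d (k + 1) = exp (-κ * δ) * d k := by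
    rw [hd_closed, hd_closed, Nat.cast_succ, add_one_mul, mul_add, exp_add]
    ring
  have hd_weight (k : ℕ) : d (k + 1) * exp (κ * ((k : ℝ) + 1) * δ) = (1 - exp (-κ * δ)) / κ := by
    rw [hd_closed, div_mul_eq_mul_div, mul_right_comm, ← exp_add, Nat.cast_succ,
      show -κ * (((k : ℝ) + 1) * δ) + κ * ((k : ℝ) + 1) * δ = 0 by ring, exp_zero, one_mul]
  rw [eq_mul_add_of_eq_add_mul_partialSum hd_geom hd_weight hz k]
  ring

/-- The discrete-time approximation z_k of the OU-colored noise
satisfies the exact ARMA(1,1) recursion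
z_{k+1} = e^{−κδ}·z_k + b_{k+1} + (λ/κ − (λ/κ+1)e^{−κδ})·b_k. -/
theorem arma_recursion_of_ou_approximation (κ lam δ : ℝ) (hκ : 0 < κ) (hδ : 0 < δ)
    (d : ℕ → ℝ)
    (hd : ∀ k : ℕ, d k = ∫ s in ((k : ℝ) * δ)..(((k : ℝ) + 1) * δ), Real.exp (-κ * s))
    (m : ℝ) (hm : m = Real.sqrt (2 * κ * δ / (1 - Real.exp (-2 * κ * δ))))
    (b : ℕ → ℝ) (ζ : ℝ) (z : ℕ → ℝ)
    (hz : ∀ k : ℕ, z k = b k + lam * d k *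
      (m * ζ + ∑ i ∈ Finset.range k, Real.exp (κ * ((i : ℝ) + 1) * δ) * b i)) :
    ∀ k : ℕ, z (k + 1) = Real.exp (-κ * δ) * z k + b (k + 1) +
      (lam / κ - (lam / κ + 1) * Real.exp (-κ * δ)) * b k :=
  arma_recursion_of_ou_approximation_general κ lam δ hκ d hd m b ζ z hz
end

section
/- Let κ > 0, λ ∈ ℝ and δ > 0alt, and let (Ω, 𝔽, 𝐏) be a probability space carrying square-integrable real random variables (b_i)_{i≥0} and ζ such that 𝐄[b_i·b_j] = δ if i = j and 0 if i ≠ j, 𝐄[ζ²] = 1/(2κ), and 𝐄[ζ·b_i] = 0 for all i. Set d_k = ∫_{kδ}^{(k+1)δ} e^{−κs} ds, m(δ) = √(2κδ/(1−e^{−2κδ})), and z_k = b_k + λ·d_k·( m(δ)·ζ + Σ_{i=0}^{k−1} e^{κ(i+1)δ}·b_i ). Then the process (z_k) is weakly stationary: for all j, m ≥ 0, 𝐄[z_j · z_{j+m}] = 𝐄[z_0 · z_m]; in particular 𝐄[z_k²] does not depend on k. -/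
/-!
Pass to `L²(μ)`, where the `b i` are orthogonal of square norm `δ` and `ζ ⟂ b i`. With
`E = exp (κ δ)` one has `d k = c / E ^ k` and `z k = b k + λ d k A k`, where
`A k = m ζ + ∑ i < k, E ^ (i + 1) b i`. The correction `m` is exactly what makes
`‖m ζ‖² (E² - 1) = δ E²`, and this gives `‖A k‖² = E ^ (2 k) ‖m ζ‖²` by induction. Since moreover
`⟪A j, A (j + n)⟫ = ‖A j‖²` and `⟪A (j + n), b j⟫ = δ E ^ (j + 1)` for `n > 0`, all powers `E ^ j`
cancel in `⟪z j, z (j + n)⟫`.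
-/

open MeasureTheory Finset RealInnerProductSpace

section OUScheme

variable {M : Type*} [AddCommGroup M] [Module ℝ M]

/-- With `x₀ = m(δ) ζ` and `E = e^{κδ}`, this is the bracket `m(δ) ζ + ∑_{i<k} e^{κ(i+1)δ} b_i`;
`ouNoise` is then `z_k` with `d_k = c / E ^ k`. -/
noncomputable def ouState (x₀ : M) (b : ℕ → M) (E : ℝ) (k : ℕ) : M :=
  x₀ + ∑ i ∈ range k, E ^ (i + 1) • b i

noncomputable def ouNoise (x₀ : M) (b : ℕ → M) (E lam c : ℝ) (k : ℕ) : M :=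
  b k + (lam * (c / E ^ k)) • ouState x₀ b E k

variable {x₀ : M} {b : ℕ → M} {E : ℝ}

@[simp] lemma ouState_zero : ouState x₀ b E 0 = x₀ := by simp [ouState]

lemma ouState_succ (k : ℕ) :
    ouState x₀ b E (k + 1) = ouState x₀ b E k + E ^ (k + 1) • b k := by
  simp only [ouState, sum_range_succ, add_assoc]

end OUScheme

section Covariance

variable {H : Type*} [NormedAddCommGroup H] [InnerProductSpace ℝ H]
  {x₀ : H} {b : ℕ → H} {δ W E : ℝ}
  (hbb : ∀ i j, ⟪b i, b j⟫ = if i = j then δ else 0) (hxb : ∀ i, ⟪x₀, b i⟫ = 0)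
include hbb hxb

lemma inner_ouState_left (i k : ℕ) :
    ⟪ouState x₀ b E k, b i⟫ = if i < k then E ^ (i + 1) * δ else 0 := by
  induction k with
  | zero => simp [hxb]
  | succ k ih =>
    rw [ouState_succ, inner_add_left, ih, real_inner_smul_left, hbb]
    rcases lt_trichotomy i k with h | rfl | h
    · simp [h, h.ne', Nat.lt_succ_of_lt h]
    · simp
    · simp [h.ne, h.not_gt, show ¬ i < k + 1 by omega]

lemma inner_ouState_add_right (j n : ℕ) :
    ⟪ouState x₀ b E j, ouState x₀ b E (j + n)⟫ = ⟪ouState x₀ b E j, ouState x₀ b E j⟫ := by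
  induction n with
  | zero => rfl
  | succ n ih =>
    rw [← add_assoc, ouState_succ, inner_add_right, ih, real_inner_smul_right, real_inner_comm,
      inner_ouState_left hbb hxb]
    simp

lemma inner_ouState_self (hxx : ⟪x₀, x₀⟫ = W) (hW : W * (E ^ 2 - 1) = δ * E ^ 2) (k : ℕ) :
    ⟪ouState x₀ b E k, ouState x₀ b E k⟫ = (E ^ 2) ^ k * W := by
  induction k with
  | zero => simpa using hxx
  | succ k ih =>
    rw [ouState_succ, real_inner_add_add_self, ih, real_inner_smul_right, real_inner_smul_left,
      real_inner_smul_right, inner_ouState_left hbb hxb, hbb]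
    simp only [lt_irrefl, if_false, if_true]
    linear_combination -(E ^ 2) ^ k * hW

lemma inner_ouNoise_add_right (hxx : ⟪x₀, x₀⟫ = W) (hW : W * (E ^ 2 - 1) = δ * E ^ 2)
    (hE : E ≠ 0) (lam c : ℝ) (j n : ℕ) :
    ⟪ouNoise x₀ b E lam c j, ouNoise x₀ b E lam c (j + n)⟫
      = (if n = 0 then δ else lam * c * δ * E / E ^ n) + lam ^ 2 * c ^ 2 * W / E ^ n := by
  simp only [ouNoise, inner_add_left, inner_add_right, real_inner_smul_left,
    real_inner_smul_right, hbb]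
  rw [real_inner_comm (ouState x₀ b E (j + n)) (b j),
    inner_ouState_left hbb hxb, inner_ouState_left hbb hxb,
    inner_ouState_add_right hbb hxb, inner_ouState_self hbb hxb hxx hW]
  rcases Nat.eq_zero_or_pos n with rfl | hn
  · simp only [add_zero, ↓reduceIte, lt_self_iff_false, mul_zero, zero_add]
    field_simp
    ring
  · simp only [Nat.left_eq_add, hn.ne', ↓reduceIte, add_lt_iff_neg_left, Nat.not_lt_zero,
      lt_add_iff_pos_right, hn, mul_zero, zero_add]
    field_simp
    ring

end Covariance

section L2

variable {Ω : Type*} [MeasurableSpace Ω] {μ : Measure Ω}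

lemma inner_toLp_eq_integral_mul {f g : Ω → ℝ} (hf : MemLp f 2 μ) (hg : MemLp g 2 μ) :
    ⟪hf.toLp f, hg.toLp g⟫ = ∫ ω, f ω * g ω ∂μ := by
  rw [L2.inner_def]
  refine integral_congr_ae ?_
  filter_upwards [hf.coeFn_toLp, hg.coeFn_toLp] with ω hfω hgω
  simp [hfω, hgω, mul_comm]

variable {p : ENNReal} {x₀ : Ω → ℝ} {b : ℕ → Ω → ℝ}

lemma memLp_ouState (hx : MemLp x₀ p μ) (hb : ∀ i, MemLp (b i) p μ) (E : ℝ) (k : ℕ) :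
    MemLp (ouState x₀ b E k) p μ :=
  hx.add (memLp_finsetSum' _ fun i _ => (hb i).const_smul _)

lemma toLp_ouState (hx : MemLp x₀ p μ) (hb : ∀ i, MemLp (b i) p μ) (E : ℝ) (k : ℕ) :
    (memLp_ouState hx hb E k).toLp _ = ouState (hx.toLp x₀) (fun i => (hb i).toLp (b i)) E k := by
  induction k with
  | zero => simp only [ouState_zero]
  | succ k ih =>
    simp only [ouState_succ]
    rw [MemLp.toLp_add (memLp_ouState hx hb E k) ((hb k).const_smul _), MemLp.toLp_const_smul, ih]

lemma memLp_ouNoise (hx : MemLp x₀ p μ) (hb : ∀ i, MemLp (b i) p μ) (E lam c : ℝ) (k : ℕ) :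
    MemLp (ouNoise x₀ b E lam c k) p μ :=
  (hb k).add ((memLp_ouState hx hb E k).const_smul _)

lemma toLp_ouNoise (hx : MemLp x₀ p μ) (hb : ∀ i, MemLp (b i) p μ) (E lam c : ℝ) (k : ℕ) :
    (memLp_ouNoise hx hb E lam c k).toLp _
      = ouNoise (hx.toLp x₀) (fun i => (hb i).toLp (b i)) E lam c k := by
  simp only [ouNoise]
  rw [MemLp.toLp_add (hb k) ((memLp_ouState hx hb E k).const_smul _),
    MemLp.toLp_const_smul _ (memLp_ouState hx hb E k),
    toLp_ouState hx hb]

end L2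

lemma integral_ouNoise_mul_ouNoise_add {Ω : Type*} [MeasurableSpace Ω] {μ : Measure Ω}
    {x₀ : Ω → ℝ} {b : ℕ → Ω → ℝ} {δ W E : ℝ} (hx : MemLp x₀ 2 μ) (hb : ∀ i, MemLp (b i) 2 μ)
    (hbb : ∀ i j, ∫ ω, b i ω * b j ω ∂μ = if i = j then δ else 0)
    (hxb : ∀ i, ∫ ω, x₀ ω * b i ω ∂μ = 0) (hxx : ∫ ω, x₀ ω * x₀ ω ∂μ = W)
    (hW : W * (E ^ 2 - 1) = δ * E ^ 2) (hE : E ≠ 0) (lam c : ℝ) (j n : ℕ) :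
    ∫ ω, ouNoise x₀ b E lam c j ω * ouNoise x₀ b E lam c (j + n) ω ∂μ
      = (if n = 0 then δ else lam * c * δ * E / E ^ n) + lam ^ 2 * c ^ 2 * W / E ^ n := by
  rw [← inner_toLp_eq_integral_mul (memLp_ouNoise hx hb E lam c j)
    (memLp_ouNoise hx hb E lam c (j + n)), toLp_ouNoise hx hb, toLp_ouNoise hx hb]
  refine inner_ouNoise_add_right (fun i j => ?_) (fun i => ?_) ?_ hW hE lam c j n <;>
    rw [inner_toLp_eq_integral_mul]
  exacts [hbb i j, hxb i, hxx]

lemma integral_exp_neg_mul {κ : ℝ} (hκ : κ ≠ 0) (a b : ℝ) :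
    ∫ s in a..b, Real.exp (-κ * s) = (Real.exp (-κ * a) - Real.exp (-κ * b)) / κ := by
  rw [intervalIntegral.integral_comp_mul_left (fun s => Real.exp s) (neg_ne_zero.mpr hκ),
    integral_exp, smul_eq_mul]
  field_simp
  ring

theorem ou_approximation_weakly_stationary_general {Ω : Type*} [MeasurableSpace Ω]
    (μ : Measure Ω)
    (κ lam δ : ℝ) (hκ : 0 < κ) (hδ : 0 < δ)
    (b : ℕ → Ω → ℝ) (ζ : Ω → ℝ)
    (hb : ∀ i, MemLp (b i) 2 μ) (hζ : MemLp ζ 2 μ)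
    (hbb : ∀ i j, ∫ ω, b i ω * b j ω ∂μ = if i = j then δ else 0)
    (hζζ : ∫ ω, ζ ω * ζ ω ∂μ = 1 / (2 * κ))
    (hζb : ∀ i, ∫ ω, ζ ω * b i ω ∂μ = 0)
    (d : ℕ → ℝ)
    (hd : ∀ k : ℕ, d k = ∫ s in ((k : ℝ) * δ)..(((k : ℝ) + 1) * δ), Real.exp (-κ * s))
    (m : ℝ) (hm : m = Real.sqrt (2 * κ * δ / (1 - Real.exp (-2 * κ * δ))))
    (z : ℕ → Ω → ℝ)
    (hz : ∀ k ω, z k ω = b k ω + lam * d k *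
      (m * ζ ω + ∑ i ∈ Finset.range k, Real.exp (κ * ((i : ℝ) + 1) * δ) * b i ω)) :
    ∀ j m' : ℕ, ∫ ω, z j ω * z (j + m') ω ∂μ = ∫ ω, z 0 ω * z m' ω ∂μ := by
  set E := Real.exp (κ * δ)
  have hE : 1 < E := Real.one_lt_exp_iff.mpr (by positivity)
  have hexp : ∀ k : ℕ, Real.exp (κ * k * δ) = E ^ k := fun k => by
    rw [← Real.exp_nat_mul]; ring_nf
  have hexp_neg : ∀ k : ℕ, Real.exp (-κ * (k * δ)) = (E ^ k)⁻¹ := fun k => by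
    rw [← hexp, ← Real.exp_neg]; ring_nf
  have hd_eq : ∀ k : ℕ, d k = (1 - E⁻¹) / κ / E ^ k := fun k => by
    rw [hd, integral_exp_neg_mul hκ.ne', ← Nat.cast_add_one, hexp_neg, hexp_neg]
    field_simp
    ring
  have hz_eq : z = ouNoise (m • ζ) b E lam ((1 - E⁻¹) / κ) := by
    funext k ω
    simp only [hz, hd_eq, ouNoise, ouState, Pi.add_apply, Pi.smul_apply, smul_eq_mul,
      Finset.sum_apply, ← Nat.cast_add_one, hexp]
  have hW : m ^ 2 / (2 * κ) * (E ^ 2 - 1) = δ * E ^ 2 := by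
    have hE2 : Real.exp (-2 * κ * δ) = (E ^ 2)⁻¹ := by
      rw [← hexp_neg]; push_cast; ring_nf
    have hE2_gt : 1 < E ^ 2 := one_lt_pow₀ hE two_ne_zero
    have hE2_lt : (E ^ 2)⁻¹ < 1 := inv_lt_one_of_one_lt₀ hE2_gt
    rw [hm, hE2, Real.sq_sqrt (div_nonneg (by positivity) (by linarith))]
    field_simp [(sub_pos.mpr hE2_gt).ne', (sub_pos.mpr hE2_lt).ne']
  have hcov := integral_ouNoise_mul_ouNoise_add (hζ.const_smul m) hb hbb
    (fun i => by simp [mul_assoc, integral_const_mul, hζb])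
    (by simp only [Pi.smul_apply, smul_eq_mul, mul_mul_mul_comm, integral_const_mul, hζζ]; ring)
    hW (by positivity) lam ((1 - E⁻¹) / κ)
  intro j n
  rw [hz_eq]
  simpa using (hcov j n).trans (hcov 0 n).symm

/-- With orthogonal square-integrable increments b_i of variance δ,
an initial state ζ of variance 1/(2κ) orthogonal to all b_i, and the stationarity
correction m(δ) = √(2κδ/(1−e^{−2κδ})), the modified discrete OU-colored noise
z_k = b_k + λ·d_k·(m(δ)ζ + Σ_{i<k} e^{κ(i+1)δ} b_i) is weakly stationary:
𝐄[z_j z_{j+m}] = 𝐄[z_0 z_m] for all j, m. -/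
theorem ou_approximation_weakly_stationary {Ω : Type*} [MeasurableSpace Ω]
    (μ : Measure Ω) [IsProbabilityMeasure μ]
    (κ lam δ : ℝ) (hκ : 0 < κ) (hδ : 0 < δ)
    (b : ℕ → Ω → ℝ) (ζ : Ω → ℝ)
    (hb : ∀ i, MemLp (b i) 2 μ) (hζ : MemLp ζ 2 μ)
    (hbb : ∀ i j, ∫ ω, b i ω * b j ω ∂μ = if i = j then δ else 0)
    (hζζ : ∫ ω, ζ ω * ζ ω ∂μ = 1 / (2 * κ))
    (hζb : ∀ i, ∫ ω, ζ ω * b i ω ∂μ = 0)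
    (d : ℕ → ℝ)
    (hd : ∀ k : ℕ, d k = ∫ s in ((k : ℝ) * δ)..(((k : ℝ) + 1) * δ), Real.exp (-κ * s))
    (m : ℝ) (hm : m = Real.sqrt (2 * κ * δ / (1 - Real.exp (-2 * κ * δ))))
    (z : ℕ → Ω → ℝ)
    (hz : ∀ k ω, z k ω = b k ω + lam * d k *
      (m * ζ ω + ∑ i ∈ Finset.range k, Real.exp (κ * ((i : ℝ) + 1) * δ) * b i ω)) :
    ∀ j m' : ℕ, ∫ ω, z j ω * z (j + m') ω ∂μ = ∫ ω, z 0 ω * z m' ω ∂μ :=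
  ou_approximation_weakly_stationary_general μ κ lam δ hκ hδ b ζ hb hζ hbb hζζ hζb d hd m hm z hz
end

section
/- Let P > 0, κ > 0 and λ ∈ ℝ, and let S(x) = (x² + (κ+λ)²)/(2π(x² + κ²)) for x ∈ ℝ. For n ∈ ℕ and k > 0 define L(n,k) = (1/(4π))·( ∫_{−n/2−k}^{−k} log(1 + (P/n)/S(x)) dx + ∫_{k}^{k+n/2} log(1 + (P/n)/S(x)) dx ). Then for each fixed n, lim_{k→∞} L(n,k) = (n/(4π))·log(1 + 2πP/n), and consequently lim_{n→∞} lim_{k→∞} L(n,k) = P/2. -/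
/-!
Since `S x → 1 / (2π)` as `|x| → ∞` and the integrand `log (1 + (P / n) / S x)` is even,
each of the two bands of width `n / 2` contributes `(n / 2) · log (1 + 2πP / n)` in the
limit `k → ∞`. The limit in `n` is then `x log (1 + t / x) → t`.
-/

open Filter Topology Real

theorem tendsto_intervalIntegral_add_atTop {f : ℝ → ℝ} {C : ℝ} (a : ℝ)
    (hf : ∀ᶠ x in atTop, ContinuousAt f x) (hlim : Tendsto f atTop (𝓝 C)) :
    Tendsto (fun k => ∫ x in k..k + a, f x) atTop (𝓝 (a * C)) := by
  rw [Metric.tendsto_atTop]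
  intro ε hε
  have hδ : 0 < ε / (|a| + 1) := by positivity
  obtain ⟨K, hK⟩ :=
    (hf.and (hlim.eventually (Metric.ball_mem_nhds C hδ))).exists_forall_of_atTop
  refine ⟨K + |a|, fun k hk => ?_⟩
  have hsub : ∀ x ∈ Set.uIcc k (k + a), K ≤ x := by
    intro x hx
    rcases Set.mem_uIcc.1 hx with hx | hx <;> linarith [neg_abs_le a, le_abs_self a]
  have hint : IntervalIntegrable f MeasureTheory.volume k (k + a) :=
    (continuousOn_of_forall_continuousAt fun x hx => (hK x (hsub x hx)).1).intervalIntegrable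
  have hbound : ‖∫ x in k..k + a, (f x - C)‖ ≤ ε / (|a| + 1) * |k + a - k| :=
    intervalIntegral.norm_integral_le_of_norm_le_const fun x hx =>
      (hK x (hsub x (Set.uIoc_subset_uIcc hx))).2.le
  rw [intervalIntegral.integral_sub hint intervalIntegrable_const,
    intervalIntegral.integral_const, add_sub_cancel_left, smul_eq_mul] at hbound
  rw [dist_eq_norm]
  calc ‖(∫ x in k..k + a, f x) - a * C‖ ≤ ε / (|a| + 1) * |a| := by simpa using hbound
    _ < ε := by
      rw [div_mul_eq_mul_div, div_lt_iff₀ (by positivity)]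
      nlinarith [abs_nonneg a]

theorem intervalIntegral_neg_neg_of_even {f : ℝ → ℝ} (heven : ∀ x, f (-x) = f x)
    (a b : ℝ) :
    ∫ x in -b..-a, f x = ∫ x in a..b, f x := by
  simp only [← intervalIntegral.integral_comp_neg, heven]

theorem tendsto_intervalIntegral_even_bands_atTop {f : ℝ → ℝ} {C : ℝ} (a : ℝ)
    (heven : ∀ x, f (-x) = f x) (hf : ∀ᶠ x in atTop, ContinuousAt f x)
    (hlim : Tendsto f atTop (𝓝 C)) :
    Tendsto (fun k => (∫ x in -a - k..-k, f x) + ∫ x in k..k + a, f x) atTop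
      (𝓝 (2 * a * C)) := by
  have hsym (k : ℝ) : ∫ x in -a - k..-k, f x = ∫ x in k..k + a, f x := by
    rw [show -a - k = -(k + a) by ring]
    exact intervalIntegral_neg_neg_of_even heven k (k + a)
  simp only [hsym, ← two_mul, mul_assoc]
  exact (tendsto_intervalIntegral_add_atTop a hf hlim).const_mul 2

theorem tendsto_sq_add_div_sq_add_atTop (b c : ℝ) :
    Tendsto (fun x : ℝ => (x ^ 2 + b) / (x ^ 2 + c)) atTop (𝓝 1) := by
  have hden : Tendsto (fun x : ℝ => x ^ 2 + c) atTop atTop :=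
    tendsto_atTop_add_const_right _ c (tendsto_pow_atTop two_ne_zero)
  have h := (tendsto_const_nhds (x := (1 : ℝ))).add
    ((tendsto_const_nhds (x := b - c)).div_atTop hden)
  rw [add_zero] at h
  refine h.congr' ?_
  filter_upwards [hden.eventually_gt_atTop 0] with x hx
  field_simp
  ring

theorem water_filling_lower_bound_general (P κ lam : ℝ) (hP : 0 < P)
    (S : ℝ → ℝ)
    (hS : ∀ x, S x = (x ^ 2 + (κ + lam) ^ 2) / (2 * Real.pi * (x ^ 2 + κ ^ 2)))
    (L : ℕ → ℝ → ℝ)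
    (hL : ∀ n k, L n k = (1 / (4 * Real.pi)) *
      ((∫ x in (-(n : ℝ) / 2 - k)..(-k), Real.log (1 + (P / (n : ℝ)) / S x)) +
       (∫ x in k..(k + (n : ℝ) / 2), Real.log (1 + (P / (n : ℝ)) / S x)))) :
    (∀ n : ℕ, 0 < n →
      Filter.Tendsto (fun k : ℝ => L n k) Filter.atTop
        (nhds (((n : ℝ) / (4 * Real.pi)) * Real.log (1 + 2 * Real.pi * P / (n : ℝ))))) ∧
    Filter.Tendsto
      (fun n : ℕ => ((n : ℝ) / (4 * Real.pi)) * Real.log (1 + 2 * Real.pi * P / (n : ℝ)))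
      Filter.atTop (nhds (P / 2)) := by
  have hπ := pi_pos
  have hS_lim : Tendsto S atTop (𝓝 (1 / (2 * π))) := by
    refine ((tendsto_sq_add_div_sq_add_atTop ((κ + lam) ^ 2) (κ ^ 2)).div_const
      (2 * π)).congr fun x => ?_
    rw [hS, ← div_mul_eq_div_div_swap]
  refine ⟨fun n hn => ?_, ?_⟩
  · have hn : (0 : ℝ) < n := Nat.cast_pos.2 hn
    have hlim : Tendsto (fun x => log (1 + P / n / S x)) atTop
        (𝓝 (log (1 + 2 * π * P / n))) := by
      rw [show 2 * π * P / n = P / n / (1 / (2 * π)) by field_simp]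
      exact (tendsto_const_nhds.add (tendsto_const_nhds.div hS_lim (by positivity))).log
        (by positivity)
    have hcont : ∀ᶠ x in atTop, ContinuousAt (fun x => log (1 + P / n / S x)) x := by
      filter_upwards [eventually_gt_atTop 0] with x hx
      rw [funext hS]
      fun_prop (disch := positivity)
    have h := (tendsto_intervalIntegral_even_bands_atTop (n / 2) (by simp [hS]) hcont
      hlim).const_mul (1 / (4 * π))
    simp only [hL, neg_div]
    convert h using 2
    field_simp
  · have h := ((tendsto_mul_log_one_add_div_atTop (2 * π * P)).comp
      tendsto_natCast_atTop_atTop).const_mul (1 / (4 * π))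
    convert h using 2
    · simp only [Function.comp_apply]
      ring
    · field_simp
      ring

/-- With S(x) = (x²+(κ+λ)²)/(2π(x²+κ²)) and
L(n,k) = (1/(4π))(∫_{−n/2−k}^{−k} log(1+(P/n)/S) + ∫_k^{k+n/2} log(1+(P/n)/S)),
for each fixed n ≥ 1, L(n,k) → (n/(4π))·log(1+2πP/n) as k → ∞, and
(n/(4π))·log(1+2πP/n) → P/2 as n → ∞. -/
theorem water_filling_lower_bound (P κ lam : ℝ) (hP : 0 < P) (hκ : 0 < κ)
    (S : ℝ → ℝ)
    (hS : ∀ x, S x = (x ^ 2 + (κ + lam) ^ 2) / (2 * Real.pi * (x ^ 2 + κ ^ 2)))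
    (L : ℕ → ℝ → ℝ)
    (hL : ∀ n k, L n k = (1 / (4 * Real.pi)) *
      ((∫ x in (-(n : ℝ) / 2 - k)..(-k), Real.log (1 + (P / (n : ℝ)) / S x)) +
       (∫ x in k..(k + (n : ℝ) / 2), Real.log (1 + (P / (n : ℝ)) / S x)))) :
    (∀ n : ℕ, 0 < n →
      Filter.Tendsto (fun k : ℝ => L n k) Filter.atTop
        (nhds (((n : ℝ) / (4 * Real.pi)) * Real.log (1 + 2 * Real.pi * P / (n : ℝ))))) ∧
    Filter.Tendsto
      (fun n : ℕ => ((n : ℝ) / (4 * Real.pi)) * Real.log (1 + 2 * Real.pi * P / (n : ℝ)))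
      Filter.atTop (nhds (P / 2)) :=
  water_filling_lower_bound_general P κ lam hP S hS L hL
end

section
/- Let P > 0, κ > 0 and λ ∈ ℝ with −κ ≤ λ < 0. For δ > 0 define φ(δ) = −e^{−κδ} and θ(δ) = λ/κ − (λ/κ + 1)·e^{−κδ}. Then for every ε > 0 there exists δ₀ > 0 such that for all 0 < δ < δ₀, every x > 0 satisfying P·δ·x²·(1+φ(δ)·x)² = (1 − x²)·(1+θ(δ)·x)² lies in the interval (1−ε, 1). In particular, as δ → 0⁺, the positive roots of this quartic tend to 1. -/
/-!
Write `E = e^{-κδ} ∈ (0, 1)` and `L = λ/κ ∈ [-1, 0)`, so `φ = -E` and `θ = L - (L + 1) E`.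
A root `x ≥ 1` would make the left side `≥ 0 ≥` the right side, forcing `1 + φ x = 0` and
then `1 + θ x = 0`, i.e. `θ = φ`; but `θ - φ = L (1 - E) < 0`. For a root `x < 1`, the right side
is at least `(1 - x)³` because `θ ≥ -1`, while the left side is less than `Pδ` because
`0 ≤ x (1 + φ x) < 1`; hence `(1 - x)³ < Pδ`, which tends to `0`.
-/

open Real

def YangKimEquation (c φ θ x : ℝ) : Prop :=
  c * x ^ 2 * (1 + φ * x) ^ 2 = (1 - x ^ 2) * (1 + θ * x) ^ 2

section YangKimEquation

variable {c φ θ x : ℝ}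

theorem YangKimEquation.lt_one (hc : 0 < c) (hφ : φ ≠ -1) (hφθ : φ ≠ θ) (hx : 0 < x)
    (h : YangKimEquation c φ θ x) : x < 1 := by
  unfold YangKimEquation at h
  by_contra! hx1
  have hrhs : (1 - x ^ 2) * (1 + θ * x) ^ 2 ≤ 0 :=
    mul_nonpos_of_nonpos_of_nonneg (by nlinarith) (sq_nonneg _)
  have hlhs : c * x ^ 2 * (1 + φ * x) ^ 2 = 0 := le_antisymm (h ▸ hrhs) (by positivity)
  have hφx : 1 + φ * x = 0 := by simpa [hc.ne', hx.ne'] using hlhs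
  have hx_ne : x ≠ 1 := fun hx_eq => hφ (by subst hx_eq; linarith)
  have hθx : 1 + θ * x = 0 := by
    have : 1 - x ^ 2 ≠ 0 := by nlinarith [lt_of_le_of_ne hx1 hx_ne.symm]
    simpa [this] using h.symm.trans hlhs
  exact hφθ (mul_right_cancel₀ hx.ne' (by linarith))

theorem YangKimEquation.one_sub_pow_three_lt (hφ₁ : -1 ≤ φ) (hφ₀ : φ ≤ 0) (hθ : -1 ≤ θ)
    (hx₀ : 0 < x) (hx₁ : x < 1) (h : YangKimEquation c φ θ x) : (1 - x) ^ 3 < c := by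
  unfold YangKimEquation at h
  have hy₀ : 0 ≤ x * (1 + φ * x) := mul_nonneg hx₀.le (by nlinarith)
  have hy₁ : x * (1 + φ * x) < 1 := by nlinarith [mul_nonpos_of_nonpos_of_nonneg hφ₀ (sq_nonneg x)]
  have hθx : 1 - x ≤ 1 + θ * x := by nlinarith
  have hbound : (1 - x) ^ 3 ≤ c * (x * (1 + φ * x)) ^ 2 := by
    have : (1 - x) ^ 2 ≤ (1 + θ * x) ^ 2 := pow_le_pow_left₀ (by linarith) hθx 2
    calc (1 - x) ^ 3 = (1 - x) * (1 - x) ^ 2 := by ring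
      _ ≤ (1 - x ^ 2) * (1 + θ * x) ^ 2 := by gcongr <;> nlinarith
      _ = c * (x * (1 + φ * x)) ^ 2 := by rw [← h]; ring
  have hy : (x * (1 + φ * x)) ^ 2 < 1 := pow_lt_one₀ hy₀ hy₁ two_ne_zero
  nlinarith [pow_pos (sub_pos.2 hx₁) 3, sq_nonneg (x * (1 + φ * x))]

end YangKimEquation

/-- For −κ ≤ λ < 0, with φ(δ) = −e^{−κδ} and
θ(δ) = λ/κ − (λ/κ+1)e^{−κδ}, for every ε > 0 there is δ₀ > 0 such that for all
0 < δ < δ₀, every positive root x of P·δ·x²·(1+φ(δ)x)² = (1−x²)(1+θ(δ)x)² lies in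
(1−ε, 1). -/
theorem yang_kim_roots_tend_to_one (P κ lam : ℝ) (hP : 0 < P) (hκ : 0 < κ)
    (h1 : -κ ≤ lam) (h2 : lam < 0) :
    ∀ ε : ℝ, 0 < ε → ∃ δ₀ : ℝ, 0 < δ₀ ∧ ∀ δ : ℝ, 0 < δ → δ < δ₀ →
      ∀ x : ℝ, 0 < x →
        P * δ * x ^ 2 * (1 + (-Real.exp (-κ * δ)) * x) ^ 2 =
          (1 - x ^ 2) * (1 + (lam / κ - (lam / κ + 1) * Real.exp (-κ * δ)) * x) ^ 2 →
        1 - ε < x ∧ x < 1 := by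
  intro ε hε
  refine ⟨ε ^ 3 / P, by positivity, fun δ hδ hδ₀ x hx hroot => ?_⟩
  have hE₀ := exp_pos (-κ * δ)
  have hE₁ : exp (-κ * δ) < 1 := exp_lt_one_iff.mpr (by linarith [mul_pos hκ hδ])
  have hL₁ : 0 ≤ lam / κ + 1 := by rw [div_add_one hκ.ne']; exact div_nonneg (by linarith) hκ.le
  have hL₀ : lam / κ < 0 := div_neg_of_neg_of_pos h2 hκ
  have hθ_lt_φ : lam / κ - (lam / κ + 1) * exp (-κ * δ) < -exp (-κ * δ) := by
    linarith [mul_neg_of_neg_of_pos hL₀ (sub_pos.2 hE₁)]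
  have hx₁ : x < 1 := YangKimEquation.lt_one (mul_pos hP hδ) (by linarith) hθ_lt_φ.ne' hx hroot
  refine ⟨?_, hx₁⟩
  have hcube : (1 - x) ^ 3 < P * δ :=
    YangKimEquation.one_sub_pow_three_lt (by linarith) (by linarith)
      (by linarith [mul_nonneg hL₁ (sub_pos.2 hE₁).le]) hx hx₁ hroot
  have hPδ : P * δ < ε ^ 3 := by rwa [lt_div_iff₀ hP, mul_comm] at hδ₀
  by_contra! hxε
  linarith [pow_le_pow_left₀ hε.le (show ε ≤ 1 - x by linarith) 3]
end

section
/- Let P > 0, κ > 0 and λ ∈ ℝ. For δ > 0 define φ(δ) = −e^{−κδ} and θ(δ) = λ/κ − (λ/κ + 1)·e^{−κδ}. Suppose δ₀ > 0 and x : (0,δ₀) → (0,1) is such that for every δ ∈ (0,δ₀), P·δ·x(δ)²·(1+φ(δ)·x(δ))² = (1 − x(δ)²)·(1+θ(δ)·x(δ))², and suppose the limit β = lim_{δ→0⁺} (1 − x(δ))/δ exists in ℝ. Then β satisfies P·(β+κ)² = 2β·(β+κ+λ)². Equivalently, lim_{δ→0⁺} (−log x(δ))/δ = β is a root of the capacity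 polynomial equation P·(x+κ)² = 2x·(x+κ+λ)². -/
/-!
Dividing the quartic by `δ³` turns it into
`P x² (A/δ)² = ((1 - x)/δ) (1 + x) (B/δ)²`, where `A = 1 + φ x` and `B = 1 + θ x`.
Since `x → 1` and `(1 - e^{-κδ})/δ → κ`, both `A/δ = (1 - x)/δ + x (1 - e^{-κδ})/δ` and
`B/δ = (1 - x)/δ + (λ/κ + 1) x (1 - e^{-κδ})/δ` have limits, `β + κ` and `β + κ + λ`;
passing to the limit gives the capacity equation. The logarithmic limit is the chain rule for
`log` at `1`, written with `dslope` so that no case `x(δ) = 1` has to be excluded.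
-/

open Filter Topology

theorem HasDerivAt.tendsto_comp_sub_div {α : Type*} {l : Filter α} {f : ℝ → ℝ} {f' a β : ℝ}
    {u g : α → ℝ} (hf : HasDerivAt f f' a) (hu : Tendsto u l (𝓝 a))
    (hβ : Tendsto (fun t => (u t - a) / g t) l (𝓝 β)) :
    Tendsto (fun t => (f (u t) - f a) / g t) l (𝓝 (f' * β)) := by
  have hslope : Tendsto (dslope f a) (𝓝 a) (𝓝 f') := by
    simpa only [dslope_same, hf.deriv] using
      (continuousAt_dslope_same.mpr hf.differentiableAt).tendsto
  refine ((hslope.comp hu).mul hβ).congr fun t => ?_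
  rw [← sub_smul_dslope f a (u t), smul_eq_mul, Function.comp_apply]
  ring

theorem tendsto_of_tendsto_sub_div {l : Filter ℝ} (hl : l ≤ 𝓝[≠] 0) {x : ℝ → ℝ} {a β : ℝ}
    (hβ : Tendsto (fun δ => (a - x δ) / δ) l (𝓝 β)) : Tendsto x l (𝓝 a) := by
  have hδ : Tendsto id l (𝓝 0) := tendsto_id.mono_left (hl.trans nhdsWithin_le_nhds)
  have hsub : Tendsto (fun δ => a - x δ) l (𝓝 0) := by
    simpa only [mul_zero] using (hβ.mul hδ).congr' <| eventually_of_mem (hl self_mem_nhdsWithin)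
      fun δ (hδ : δ ≠ 0) => div_mul_cancel₀ _ hδ
  simpa only [sub_sub_cancel, sub_zero] using hsub.const_sub a

theorem tendsto_one_sub_exp_neg_mul_div (κ : ℝ) :
    Tendsto (fun δ => (1 - Real.exp (-κ * δ)) / δ) (𝓝[≠] 0) (𝓝 κ) := by
  have hlin : Tendsto (fun δ : ℝ => (-κ * δ - 0) / δ) (𝓝[≠] 0) (𝓝 (-κ)) :=
    tendsto_const_nhds.congr' <| eventually_nhdsWithin_of_forall
      fun δ (hδ : δ ≠ 0) => by simp only [sub_zero, mul_div_cancel_right₀ _ hδ]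
  have hcont : Tendsto (fun δ : ℝ => -κ * δ) (𝓝[≠] 0) (𝓝 0) :=
    ((continuous_const_mul (-κ)).tendsto' 0 0 (mul_zero _)).mono_left nhdsWithin_le_nhds
  have := ((Real.hasDerivAt_exp 0).tendsto_comp_sub_div hcont hlin).neg
  simpa only [Real.exp_zero, one_mul, neg_neg, ← neg_div, neg_sub] using this

theorem tendsto_neg_log_div {α : Type*} {l : Filter α} {x g : α → ℝ} {β : ℝ}
    (hx : Tendsto x l (𝓝 1)) (hβ : Tendsto (fun t => (1 - x t) / g t) l (𝓝 β)) :
    Tendsto (fun t => -Real.log (x t) / g t) l (𝓝 β) := by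
  have hβ' : Tendsto (fun t => (x t - 1) / g t) l (𝓝 (-β)) := by
    simpa only [← neg_div, neg_sub] using hβ.neg
  have := ((Real.hasDerivAt_log one_ne_zero).tendsto_comp_sub_div hx hβ').neg
  simpa only [Real.log_one, sub_zero, inv_one, one_mul, neg_neg, ← neg_div] using this

theorem tendsto_one_add_mul_div {l : Filter ℝ} {x e : ℝ → ℝ} {β κ : ℝ} (c : ℝ)
    (hx : Tendsto x l (𝓝 1)) (hβ : Tendsto (fun δ => (1 - x δ) / δ) l (𝓝 β))
    (he : Tendsto (fun δ => (1 - e δ) / δ) l (𝓝 κ)) :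
    Tendsto (fun δ => (1 + (c - (c + 1) * e δ) * x δ) / δ) l (𝓝 (β + (c + 1) * κ)) := by
  have := hβ.add ((hx.const_mul (c + 1)).mul he)
  rw [mul_one] at this
  exact this.congr fun δ => by ring

theorem quartic_div_cube {P δ y a b : ℝ} (hδ : δ ≠ 0)
    (h : P * δ * y ^ 2 * a ^ 2 = (1 - y ^ 2) * b ^ 2) :
    P * y ^ 2 * (a / δ) ^ 2 = (1 - y) / δ * (1 + y) * (b / δ) ^ 2 := by
  field_simp
  linear_combination h

theorem yang_kim_limit_is_capacity_root_general (P κ lam : ℝ) (hκ : 0 < κ)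
    (δ₀ : ℝ) (hδ₀ : 0 < δ₀) (x : ℝ → ℝ)
    (hroot : ∀ δ ∈ Set.Ioo (0:ℝ) δ₀,
      P * δ * (x δ) ^ 2 * (1 + (-Real.exp (-κ * δ)) * x δ) ^ 2 =
        (1 - (x δ) ^ 2) *
          (1 + (lam / κ - (lam / κ + 1) * Real.exp (-κ * δ)) * x δ) ^ 2)
    (β : ℝ)
    (hβ : Filter.Tendsto (fun δ => (1 - x δ) / δ) (𝓝[>] (0:ℝ)) (𝓝 β)) :
    P * (β + κ) ^ 2 = 2 * β * (β + κ + lam) ^ 2 ∧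
    Filter.Tendsto (fun δ => -Real.log (x δ) / δ) (𝓝[>] (0:ℝ)) (𝓝 β) := by
  have hx : Tendsto x (𝓝[>] 0) (𝓝 1) := tendsto_of_tendsto_sub_div (nhdsGT_le_nhdsNE 0) hβ
  have hE := (tendsto_one_sub_exp_neg_mul_div κ).mono_left (nhdsGT_le_nhdsNE 0)
  have hA := tendsto_one_add_mul_div 0 hx hβ hE
  have hB := tendsto_one_add_mul_div (lam / κ) hx hβ hE
  simp only [zero_add, one_mul, zero_sub] at hA
  rw [add_mul, div_mul_cancel₀ _ hκ.ne', one_mul] at hB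
  have hlhs := (tendsto_const_nhds (x := P)).mul (hx.pow 2) |>.mul (hA.pow 2)
  have hrhs := (hβ.mul (hx.const_add 1)).mul (hB.pow 2)
  have hquartic := eventually_of_mem (Ioo_mem_nhdsGT hδ₀)
    fun δ hδ => quartic_div_cube hδ.1.ne' (hroot δ hδ)
  refine ⟨?_, tendsto_neg_log_div hx hβ⟩
  have := tendsto_nhds_unique (hlhs.congr' hquartic) hrhs
  linear_combination this

/-- If x(δ) ∈ (0,1) solves the Yang–Kim quartic
P·δ·x²·(1+φ(δ)x)² = (1−x²)(1+θ(δ)x)² for all δ ∈ (0,δ₀), and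
β = lim_{δ→0⁺} (1−x(δ))/δ exists, then P·(β+κ)² = 2β·(β+κ+λ)², and moreover
(−log x(δ))/δ → β as δ → 0⁺. -/
theorem yang_kim_limit_is_capacity_root (P κ lam : ℝ) (hP : 0 < P) (hκ : 0 < κ)
    (δ₀ : ℝ) (hδ₀ : 0 < δ₀) (x : ℝ → ℝ)
    (hx01 : ∀ δ ∈ Set.Ioo (0:ℝ) δ₀, x δ ∈ Set.Ioo (0:ℝ) 1)
    (hroot : ∀ δ ∈ Set.Ioo (0:ℝ) δ₀,
      P * δ * (x δ) ^ 2 * (1 + (-Real.exp (-κ * δ)) * x δ) ^ 2 =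
        (1 - (x δ) ^ 2) *
          (1 + (lam / κ - (lam / κ + 1) * Real.exp (-κ * δ)) * x δ) ^ 2)
    (β : ℝ)
    (hβ : Filter.Tendsto (fun δ => (1 - x δ) / δ) (𝓝[>] (0:ℝ)) (𝓝 β)) :
    P * (β + κ) ^ 2 = 2 * β * (β + κ + lam) ^ 2 ∧
    Filter.Tendsto (fun δ => -Real.log (x δ) / δ) (𝓝[>] (0:ℝ)) (𝓝 β) :=
  yang_kim_limit_is_capacity_root_general P κ lam hκ δ₀ hδ₀ x hroot β hβ
end
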